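/- arXiv:1803.07206 — 10 statements merged into one kernel-verified Lean document; each statement's English description precedes it below -/
import Mathlib

section
/- For every permutation π of Fin n, the cost of the corresponding perfect matching satisfies ∑_{i} |s(π(i)) − r(i)| ≥ ∑_{j=1}^{2n−1} diff(j) · (p(j+1) − p(j)). -/
/-! Sorting the `2n` points splits the line into gaps `[p (j - 1), p j]`. The edge matching
positions `a ≤ b` costs `p b - p a`, the total length of the gaps it spans, so the cost of a
matching is `∑ j, (number of edges crossing gap j) * (p j - p (j - 1))`. An edge crosses gap `j`
exactly when one endpoint lies among the first `j` points and the other does not, so at least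
`diff j` edges cross it: the surplus of servers over requests (or vice versa) among the first `j`
points must be matched across the gap. -/

/-- The first `j` entries are those with indices `0, …, j - 1`. -/
def lineDiff (lab : ℕ → Bool) (j : ℕ) : ℤ :=
  |(((Finset.range j).filter (fun k => lab k = true)).card : ℤ) -
    (((Finset.range j).filter (fun k => lab k = false)).card : ℤ)|

open Finset Function

lemma sum_Ico_succ_gap (p : ℕ → ℝ) {m k : ℕ} (hmk : m ≤ k) :
    ∑ j ∈ Ico (m + 1) (k + 1), (p j - p (j - 1)) = p k - p m := by
  rw [← sum_Ico_add']
  simpa using sum_Ico_sub p hmk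

lemma abs_sub_eq_sum_gaps {N : ℕ} {p : ℕ → ℝ} (hp : MonotoneOn p (Set.Iio N)) {a b : ℕ}
    (ha : a < N) (hb : b < N) :
    |p a - p b| = ∑ j ∈ Ico 1 N with Xor (a < j) (b < j), (p j - p (j - 1)) := by
  wlog hab : a ≤ b generalizing a b
  · simp only [abs_sub_comm (p a), xor_comm (a < _)]
    exact this hb ha (by omega)
  have hgaps : {j ∈ Ico 1 N | Xor (a < j) (b < j)} = Ico (a + 1) (b + 1) := by
    ext j
    simp only [mem_filter, mem_Ico, xor_def]
    omega
  rw [hgaps, sum_Ico_succ_gap p hab, abs_sub_comm,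
    abs_of_nonneg (sub_nonneg.2 (hp ha hb hab))]

lemma abs_card_filter_lt_sub_le {ι : Type*} (s : Finset ι) (a b : ι → ℕ) (j : ℕ) :
    |(#{i ∈ s | a i < j} : ℤ) - #{i ∈ s | b i < j}| ≤ #{i ∈ s | Xor (a i < j) (b i < j)} := by
  simp only [natCast_card_filter, ← sum_sub_distrib]
  refine (abs_sum_le_sum_abs _ _).trans (sum_le_sum fun i _ => ?_)
  simp only [xor_def]
  split_ifs <;> simp_all

lemma card_filter_range_eq_card_filter_lt {ι : Type*} [Fintype ι] {f : ι → ℕ}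
    (hf : Injective f) {P : ℕ → Prop} [DecidablePred P] {j : ℕ}
    (hP : ∀ k < j, P k ↔ ∃ i, f i = k) :
    #{k ∈ range j | P k} = #{i | f i < j} := by
  rw [← card_image_of_injective _ hf]
  congr 1
  ext k
  simp only [mem_filter, mem_range, mem_image, mem_univ, true_and]
  constructor
  · rintro ⟨hk, hPk⟩
    obtain ⟨i, rfl⟩ := (hP k hk).1 hPk
    exact ⟨i, hk, rfl⟩
  · rintro ⟨i, hi, rfl⟩
    exact ⟨hi, (hP _ hi).2 ⟨i, rfl⟩⟩

lemma lab_eq_true_iff {α β : Type*} {N : ℕ} {lab : ℕ → Bool} (e : α ⊕ β ≃ Fin N)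
    (hl : ∀ i, lab (e (.inl i)) = true) (hr : ∀ i, lab (e (.inr i)) = false)
    {k : ℕ} (hk : k < N) : lab k = true ↔ ∃ i, (e (.inl i) : ℕ) = k := by
  constructor
  · intro hlab
    rcases h : e.symm ⟨k, hk⟩ with i | i
    · exact ⟨i, by simp [← h]⟩
    · have := hr i
      simp_all [← h]
  · rintro ⟨i, rfl⟩
    exact hl i

lemma lab_eq_false_iff {α β : Type*} {N : ℕ} {lab : ℕ → Bool} (e : α ⊕ β ≃ Fin N)
    (hl : ∀ i, lab (e (.inl i)) = true) (hr : ∀ i, lab (e (.inr i)) = false)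
    {k : ℕ} (hk : k < N) : lab k = false ↔ ∃ i, (e (.inr i) : ℕ) = k := by
  simpa using lab_eq_true_iff (lab := fun k => !lab k) ((Equiv.sumComm β α).trans e)
    (by simpa using hr) (by simpa using hl) hk

lemma lineDiff_le_card_crossing {n : ℕ} {lab : ℕ → Bool} (e : Fin n ⊕ Fin n ≃ Fin (2 * n))
    (hl : ∀ i, lab (e (.inl i)) = true) (hr : ∀ i, lab (e (.inr i)) = false)
    (π : Equiv.Perm (Fin n)) {j : ℕ} (hj : j ≤ 2 * n) :
    lineDiff lab j ≤ #{i | Xor ((e (.inl (π i)) : ℕ) < j) ((e (.inr i) : ℕ) < j)} := by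
  have hservers : #{k ∈ range j | lab k = true} = #{i | (e (.inl (π i)) : ℕ) < j} :=
    card_filter_range_eq_card_filter_lt
      (Fin.val_injective.comp (e.injective.comp (Sum.inl_injective.comp π.injective)))
      fun k hk => (lab_eq_true_iff e hl hr (by omega)).trans π.surjective.exists
  have hrequests : #{k ∈ range j | lab k = false} = #{i | (e (.inr i) : ℕ) < j} :=
    card_filter_range_eq_card_filter_lt
      (Fin.val_injective.comp (e.injective.comp Sum.inr_injective))
      fun k hk => lab_eq_false_iff e hl hr (by omega)
  rw [lineDiff, hservers, hrequests]
  exact abs_card_filter_lt_sub_le _ _ _ j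

theorem matching_cost_lower_bound_general (n : ℕ) (s r : Fin n → ℝ)
    (p : ℕ → ℝ) (lab : ℕ → Bool)
    (hmono : ∀ j k : ℕ, j ≤ k → k < 2 * n → p j ≤ p k)
    (e : Fin n ⊕ Fin n ≃ Fin (2 * n))
    (hes : ∀ i : Fin n, p (e (Sum.inl i) : ℕ) = s i ∧ lab (e (Sum.inl i) : ℕ) = true)
    (her : ∀ i : Fin n, p (e (Sum.inr i) : ℕ) = r i ∧ lab (e (Sum.inr i) : ℕ) = false)
    (π : Equiv.Perm (Fin n)) :
    ∑ j ∈ Finset.Ico 1 (2 * n), (lineDiff lab j : ℝ) * (p j - p (j - 1)) ≤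
      ∑ i, |s (π i) - r i| := by
  have hp : MonotoneOn p (Set.Iio (2 * n)) := fun j _ k hk hjk => hmono j k hjk hk
  have hcost : ∀ i, |s (π i) - r i| = ∑ j ∈ Ico 1 (2 * n),
      if Xor ((e (.inl (π i)) : ℕ) < j) ((e (.inr i) : ℕ) < j) then p j - p (j - 1) else 0 := by
    intro i
    rw [← (hes (π i)).1, ← (her i).1, ← sum_filter]
    exact abs_sub_eq_sum_gaps hp (e _).2 (e _).2
  simp only [hcost]
  rw [sum_comm]
  refine sum_le_sum fun j hj => ?_
  rw [mem_Ico] at hj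
  rw [← sum_filter, sum_const, nsmul_eq_mul]
  have hgap : 0 ≤ p j - p (j - 1) := sub_nonneg.2 (hmono _ _ (Nat.sub_le j 1) hj.2)
  exact mul_le_mul_of_nonneg_right
    (mod_cast lineDiff_le_card_crossing e (fun i => (hes i).2) (fun i => (her i).2) π hj.2.le) hgap

/-- For every permutation `π`, the cost of the corresponding perfect
matching is at least `∑_{j=1}^{2n-1} diff(j) · (p(j+1) − p(j))`, where `p` is a
nondecreasing enumeration of all `2n` points with a labeling `lab` consistent with
the multiset of server and request points.  (In this 0-indexed formulation the
`j`-th interval, for `1 ≤ j ≤ 2n-1`, is `[p (j-1), p j]`, and `diff j` counts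
labels among the first `j` entries `p 0, …, p (j-1)`.) -/
theorem matching_cost_lower_bound (n : ℕ) (hn : 1 ≤ n) (s r : Fin n → ℝ)
    (p : ℕ → ℝ) (lab : ℕ → Bool)
    (hmono : ∀ j k : ℕ, j ≤ k → k < 2 * n → p j ≤ p k)
    (e : Fin n ⊕ Fin n ≃ Fin (2 * n))
    (hes : ∀ i : Fin n, p (e (Sum.inl i) : ℕ) = s i ∧ lab (e (Sum.inl i) : ℕ) = true)
    (her : ∀ i : Fin n, p (e (Sum.inr i) : ℕ) = r i ∧ lab (e (Sum.inr i) : ℕ) = false)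
    (π : Equiv.Perm (Fin n)) :
    ∑ j ∈ Finset.Ico 1 (2 * n), (lineDiff lab j : ℝ) * (p j - p (j - 1)) ≤
      ∑ i, |s (π i) - r i| :=
  matching_cost_lower_bound_general n s r p lab hmono e hes her π
end

section
/- Let π be a permutation of Fin n (a perfect matching of the servers and requests on the line). Suppose that for every j with 1 ≤ j ≤ 2n−1, the matched pairs that contain the interval [p(j), p(j+1)] are either all left edges or all right edges. Then π is an optimal matching: w(π) = w_opt. -/
private lemma tele_sum (p : ℕ → ℝ) {m M : ℕ} (h : m ≤ M) :
    ∑ j ∈ Finset.Ioc m M, (p j - p (j - 1)) = p M - p m := by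
  induction M, h using Nat.le_induction with
  | base => simp
  | succ M hm ih =>
    rw [Finset.sum_Ioc_succ_top (by omega), ih]
    have hM : M + 1 - 1 = M := by omega
    rw [hM]; ring

private lemma edge_formula (n : ℕ) (p : ℕ → ℝ)
    (hmono : ∀ j k : ℕ, j ≤ k → k < 2 * n → p j ≤ p k)
    (a b : ℕ) (ha : a < 2 * n) (hb : b < 2 * n) :
    |p a - p b| = ∑ j ∈ Finset.Ico 1 (2 * n),
      (p j - p (j - 1)) * (if min a b < j ∧ j ≤ max a b then (1:ℝ) else 0) := by
  have hfil : (Finset.Ico 1 (2 * n)).filter (fun j => min a b < j ∧ j ≤ max a b)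
      = Finset.Ioc (min a b) (max a b) := by
    ext j
    simp only [Finset.mem_filter, Finset.mem_Ico, Finset.mem_Ioc]
    omega
  have hstep : ∑ j ∈ Finset.Ico 1 (2 * n),
      (p j - p (j - 1)) * (if min a b < j ∧ j ≤ max a b then (1:ℝ) else 0)
      = ∑ j ∈ Finset.Ico 1 (2 * n),
        (if min a b < j ∧ j ≤ max a b then p j - p (j - 1) else 0) :=
    Finset.sum_congr rfl fun j _ => by split_ifs <;> simp
  rw [hstep, ← Finset.sum_filter, hfil, tele_sum p min_le_max]
  rcases le_total a b with h | h
  · rw [min_eq_left h, max_eq_right h,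
      abs_of_nonpos (by linarith [hmono a b h hb])]
    ring
  · rw [min_eq_right h, max_eq_left h,
      abs_of_nonneg (by linarith [hmono b a h ha])]

private lemma ind_split (a b j : ℕ) :
    (if min a b < j ∧ j ≤ max a b then (1:ℝ) else 0)
      = (if a < j ∧ j ≤ b then (1:ℝ) else 0)
        + (if b < j ∧ j ≤ a then (1:ℝ) else 0) := by
  rcases le_total a b with h | h
  · rw [min_eq_left h, max_eq_right h]
    split_ifs <;> first | (exfalso; omega) | norm_num
  · rw [min_eq_right h, max_eq_left h]
    split_ifs <;> first | (exfalso; omega) | norm_num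

private lemma ind_bal (a b j : ℕ) :
    (if a < j ∧ j ≤ b then (1:ℝ) else 0) - (if b < j ∧ j ≤ a then (1:ℝ) else 0)
      = (if a < j then (1:ℝ) else 0) - (if b < j then (1:ℝ) else 0) := by
  split_ifs <;> first | (exfalso; omega) | norm_num

/-- property (OPT): Let `π` be a perfect matching of the servers
and requests on the line, and let `p` be a nondecreasing enumeration of all
`2n` points (consistency of the enumeration with the multiset of points is
witnessed by the equivalence `e`).  Suppose that for every `j` with
`1 ≤ j ≤ 2n−1`, the matched pairs that contain the interval `[p (j-1), p j]`
(0-indexed) are either all left edges (`s(π i) ≤ r i`) or all right edges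
(`r i ≤ s(π i)`).  Then `π` is an optimal matching: its cost is the least cost
over all perfect matchings. -/
theorem aligned_matching_optimal (n : ℕ) (hn : 1 ≤ n) (s r : Fin n → ℝ)
    (p : ℕ → ℝ)
    (hmono : ∀ j k : ℕ, j ≤ k → k < 2 * n → p j ≤ p k)
    (e : Fin n ⊕ Fin n ≃ Fin (2 * n))
    (hes : ∀ i : Fin n, p (e (Sum.inl i) : ℕ) = s i)
    (her : ∀ i : Fin n, p (e (Sum.inr i) : ℕ) = r i)
    (π : Equiv.Perm (Fin n))
    (halign : ∀ j : ℕ, 1 ≤ j → j < 2 * n →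
      (∀ i : Fin n,
          (min (s (π i)) (r i) ≤ p (j - 1) ∧ p j ≤ max (s (π i)) (r i)) →
          s (π i) ≤ r i) ∨
      (∀ i : Fin n,
          (min (s (π i)) (r i) ≤ p (j - 1) ∧ p j ≤ max (s (π i)) (r i)) →
          r i ≤ s (π i))) :
    IsLeast {c : ℝ | ∃ σ : Equiv.Perm (Fin n), c = ∑ i, |s (σ i) - r i|}
      (∑ i, |s (π i) - r i|) := by
  constructor
  · exact ⟨π, rfl⟩
  rintro c ⟨σ, rfl⟩
  have key : ∀ τ : Equiv.Perm (Fin n),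
      ∑ i, |s (τ i) - r i| = ∑ j ∈ Finset.Ico 1 (2 * n), (p j - p (j - 1)) *
        ∑ i : Fin n,
          (if min ((e (Sum.inl (τ i)) : Fin (2 * n)) : ℕ)
                ((e (Sum.inr i) : Fin (2 * n)) : ℕ) < j ∧
              j ≤ max ((e (Sum.inl (τ i)) : Fin (2 * n)) : ℕ)
                ((e (Sum.inr i) : Fin (2 * n)) : ℕ)
            then (1:ℝ) else 0) := by
    intro τ
    have h1 : ∀ i : Fin n, |s (τ i) - r i| = ∑ j ∈ Finset.Ico 1 (2 * n),
        (p j - p (j - 1)) *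
          (if min ((e (Sum.inl (τ i)) : Fin (2 * n)) : ℕ)
                ((e (Sum.inr i) : Fin (2 * n)) : ℕ) < j ∧
              j ≤ max ((e (Sum.inl (τ i)) : Fin (2 * n)) : ℕ)
                ((e (Sum.inr i) : Fin (2 * n)) : ℕ)
            then (1:ℝ) else 0) := by
      intro i
      rw [← hes (τ i), ← her i]
      exact edge_formula n p hmono _ _ (Fin.is_lt _) (Fin.is_lt _)
    rw [Finset.sum_congr rfl fun i _ => h1 i, Finset.sum_comm]
    exact Finset.sum_congr rfl fun j _ => (Finset.mul_sum _ _ _).symm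
  rw [key π, key σ]
  apply Finset.sum_le_sum
  intro j hj
  rw [Finset.mem_Ico] at hj
  have hq0 : 0 ≤ p j - p (j - 1) :=
    sub_nonneg.2 (hmono (j - 1) j (by omega) hj.2)
  rcases eq_or_lt_of_le hq0 with h0 | hpos
  · rw [← h0, zero_mul, zero_mul]
  refine mul_le_mul_of_nonneg_left ?_ hq0
  have splitsum : ∀ τ : Equiv.Perm (Fin n),
      (∑ i : Fin n,
        (if min ((e (Sum.inl (τ i)) : Fin (2 * n)) : ℕ)
              ((e (Sum.inr i) : Fin (2 * n)) : ℕ) < j ∧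
            j ≤ max ((e (Sum.inl (τ i)) : Fin (2 * n)) : ℕ)
              ((e (Sum.inr i) : Fin (2 * n)) : ℕ)
          then (1:ℝ) else 0))
      = (∑ i : Fin n, (if ((e (Sum.inl (τ i)) : Fin (2 * n)) : ℕ) < j ∧
            j ≤ ((e (Sum.inr i) : Fin (2 * n)) : ℕ) then (1:ℝ) else 0))
        + ∑ i : Fin n, (if ((e (Sum.inr i) : Fin (2 * n)) : ℕ) < j ∧
            j ≤ ((e (Sum.inl (τ i)) : Fin (2 * n)) : ℕ) then (1:ℝ) else 0) := by
    intro τ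
    rw [← Finset.sum_add_distrib]
    exact Finset.sum_congr rfl fun i _ => ind_split _ _ j
  have hLR : ∀ τ : Equiv.Perm (Fin n),
      (∑ i : Fin n, (if ((e (Sum.inl (τ i)) : Fin (2 * n)) : ℕ) < j ∧
            j ≤ ((e (Sum.inr i) : Fin (2 * n)) : ℕ) then (1:ℝ) else 0))
      - (∑ i : Fin n, (if ((e (Sum.inr i) : Fin (2 * n)) : ℕ) < j ∧
            j ≤ ((e (Sum.inl (τ i)) : Fin (2 * n)) : ℕ) then (1:ℝ) else 0))
      = (∑ i : Fin n, (if ((e (Sum.inl i) : Fin (2 * n)) : ℕ) < j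
            then (1:ℝ) else 0))
        - ∑ i : Fin n, (if ((e (Sum.inr i) : Fin (2 * n)) : ℕ) < j
            then (1:ℝ) else 0) := by
    intro τ
    have hperm : (∑ i : Fin n, (if ((e (Sum.inl (τ i)) : Fin (2 * n)) : ℕ) < j
          then (1:ℝ) else 0))
        = ∑ i : Fin n, (if ((e (Sum.inl i) : Fin (2 * n)) : ℕ) < j
          then (1:ℝ) else 0) :=
      Equiv.sum_comp τ (fun k => if ((e (Sum.inl k) : Fin (2 * n)) : ℕ) < j
        then (1:ℝ) else 0)
    rw [← hperm, ← Finset.sum_sub_distrib, ← Finset.sum_sub_distrib]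
    exact Finset.sum_congr rfl fun i _ => ind_bal _ _ j
  have hnnL : (0:ℝ) ≤ ∑ i : Fin n,
      (if ((e (Sum.inl (σ i)) : Fin (2 * n)) : ℕ) < j ∧
        j ≤ ((e (Sum.inr i) : Fin (2 * n)) : ℕ) then (1:ℝ) else 0) :=
    Finset.sum_nonneg fun i _ => by positivity
  have hnnR : (0:ℝ) ≤ ∑ i : Fin n,
      (if ((e (Sum.inr i) : Fin (2 * n)) : ℕ) < j ∧
        j ≤ ((e (Sum.inl (σ i)) : Fin (2 * n)) : ℕ) then (1:ℝ) else 0) :=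
    Finset.sum_nonneg fun i _ => by positivity
  rw [splitsum π, splitsum σ]
  have e1 := hLR π
  have e2 := hLR σ
  rcases halign j hj.1 hj.2 with hleft | hright
  · have hR0 : (∑ i : Fin n, (if ((e (Sum.inr i) : Fin (2 * n)) : ℕ) < j ∧
        j ≤ ((e (Sum.inl (π i)) : Fin (2 * n)) : ℕ) then (1:ℝ) else 0)) = 0 := by
      refine Finset.sum_eq_zero fun i _ => ?_
      rw [if_neg]
      rintro ⟨h1, h2⟩
      have hr : r i ≤ p (j - 1) := by
        rw [← her i]; exact hmono _ _ (by omega) (by omega)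
      have hs : p j ≤ s (π i) := by
        rw [← hes (π i)]; exact hmono _ _ h2 (Fin.is_lt _)
      have := hleft i ⟨le_trans (min_le_right _ _) hr,
        le_trans hs (le_max_left _ _)⟩
      linarith
    rw [hR0] at e1 ⊢
    linarith
  · have hL0 : (∑ i : Fin n, (if ((e (Sum.inl (π i)) : Fin (2 * n)) : ℕ) < j ∧
        j ≤ ((e (Sum.inr i) : Fin (2 * n)) : ℕ) then (1:ℝ) else 0)) = 0 := by
      refine Finset.sum_eq_zero fun i _ => ?_
      rw [if_neg]
      rintro ⟨h1, h2⟩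
      have hs : s (π i) ≤ p (j - 1) := by
        rw [← hes (π i)]; exact hmono _ _ (by omega) (by omega)
      have hr : p j ≤ r i := by
        rw [← her i]; exact hmono _ _ h2 (Fin.is_lt _)
      have := hright i ⟨le_trans (min_le_left _ _) hs,
        le_trans hr (le_max_right _ _)⟩
      linarith
    rw [hL0] at e1 ⊢
    linarith
end

section
/- Let 0 < ε ≤ 1/8, let the input be ε-well-separated, and let π be an ε-well-aligned perfect matching. Then w_close + w_med ≤ (2/ε + 3) · w_opt + (4ε/(1 − 2ε)) · w_far. -/
/-- `x` lies in the interval `I_L' = [−εΔ, εΔ]`. -/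
abbrev inIL (ε Δ x : ℝ) : Prop := -(ε * Δ) ≤ x ∧ x ≤ ε * Δ

/-- `x` lies in the interval `I_R' = [(1−ε)Δ, (1+ε)Δ]`. -/
abbrev inIR (ε Δ x : ℝ) : Prop := (1 - ε) * Δ ≤ x ∧ x ≤ (1 + ε) * Δ

/-! The signed number `flow r (s ∘ π) x` of edges `r i → s (π i)` passing over `x` equals
`#{i | r i < x} - #{j | s j < x}`, so it does not depend on `π`; since an edge covers each point at
most once, `∫ |flow r s| ≤ w(σ)` for every matching `σ`, hence `∫ |flow r s| ≤ w_opt`.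
Well-alignment makes every close edge in `I_R'` point rightwards, and over `I_R'` only far edges
point leftwards, so the close cost in `I_R'` is at most `∫_{I_R'} |flow r s| + 2εΔ · #far`;
symmetrically in `I_L'`. A far edge costs at least `(1 - 2ε)Δ`, which converts `4εΔ · #far` into
the `w_far` term, and a medium request lies at distance between `εΔ` and `Δ` from every server,
which gives `w_med ≤ w_opt / ε`. -/

open MeasureTheory Set Finset
open scoped Interval ENNReal

lemma setIntegral_add_setIntegral_le_integral {α : Type*} [MeasurableSpace α] {μ : Measure α}
    {f : α → ℝ} {s t : Set α} (hf : Integrable f μ) (hf0 : 0 ≤ f) (hst : Disjoint s t)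
    (ht : MeasurableSet t) : ∫ x in s, f x ∂μ + ∫ x in t, f x ∂μ ≤ ∫ x, f x ∂μ := by
  rw [← setIntegral_union hst ht hf.integrableOn hf.integrableOn]
  exact setIntegral_le_integral hf (ae_of_all _ hf0)

section Flow

variable {ι : Type*} [Fintype ι]

noncomputable def flow (a b : ι → ℝ) (x : ℝ) : ℝ :=
  ∑ i, ((Ioc (a i) (b i)).indicator 1 x - (Ioc (b i) (a i)).indicator 1 x)

lemma indicator_Ioc_sub_indicator_Ioc (a b x : ℝ) :
    (Ioc a b).indicator (1 : ℝ → ℝ) x - (Ioc b a).indicator 1 x =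
      (Ioi a).indicator 1 x - (Ioi b).indicator 1 x := by
  by_cases ha : a < x <;> by_cases hb : b < x <;> simp [ha, hb, not_lt.mp]

lemma abs_indicator_Ioc_sub_indicator_Ioc (a b x : ℝ) :
    |(Ioc a b).indicator (1 : ℝ → ℝ) x - (Ioc b a).indicator 1 x| = (Ι a b).indicator 1 x := by
  have h0 (t : Set ℝ) : 0 ≤ t.indicator (1 : ℝ → ℝ) x :=
    indicator_nonneg (fun _ _ => zero_le_one) x
  rcases le_total a b with h | h
  · simp [Ioc_eq_empty_of_le h, uIoc_of_le h, abs_of_nonneg (h0 _)]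
  · simp [Ioc_eq_empty_of_le h, uIoc_of_ge h, abs_of_nonneg (h0 _)]

lemma integrable_indicator_Ioc (a b : ℝ) : Integrable ((Ioc a b).indicator (1 : ℝ → ℝ)) :=
  (integrable_indicator_iff measurableSet_Ioc).2 (integrableOn_const measure_Ioc_lt_top.ne)

lemma flow_eq_sub (a b : ι → ℝ) (x : ℝ) :
    flow a b x = ∑ i, (Ioi (a i)).indicator 1 x - ∑ i, (Ioi (b i)).indicator 1 x := by
  simp only [flow, indicator_Ioc_sub_indicator_Ioc, Finset.sum_sub_distrib]

lemma flow_comp_perm (a b : ι → ℝ) (σ : Equiv.Perm ι) : flow a (b ∘ σ) = flow a b := by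
  ext x
  simp only [flow_eq_sub, Function.comp_apply,
    Equiv.sum_comp σ fun j => (Ioi (b j)).indicator (1 : ℝ → ℝ) x]

lemma flow_swap (a b : ι → ℝ) : flow b a = -flow a b := by
  ext x
  simp only [flow, Pi.neg_apply, ← Finset.sum_neg_distrib, neg_sub]

lemma integrable_flow (a b : ι → ℝ) : Integrable (flow a b) := by
  unfold flow
  exact integrable_finsetSum _ fun i _ =>
    (integrable_indicator_Ioc _ _).sub (integrable_indicator_Ioc _ _)

lemma abs_flow_le (a b : ι → ℝ) (x : ℝ) : |flow a b x| ≤ ∑ i, (Ι (a i) (b i)).indicator 1 x :=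
  (abs_sum_le_sum_abs _ _).trans_eq <| by simp only [abs_indicator_Ioc_sub_indicator_Ioc]

lemma integral_abs_flow_le (a b : ι → ℝ) : ∫ x, |flow a b x| ≤ ∑ i, |b i - a i| := by
  have hint (i : ι) : Integrable ((Ι (a i) (b i)).indicator (1 : ℝ → ℝ)) :=
    integrable_indicator_Ioc _ _
  calc ∫ x, |flow a b x| ≤ ∫ x, ∑ i, (Ι (a i) (b i)).indicator 1 x :=
        integral_mono (integrable_flow a b).abs (integrable_finsetSum _ fun i _ => hint i)
          (abs_flow_le a b)
    _ = ∑ i, |b i - a i| := by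
        rw [integral_finsetSum _ fun i _ => hint i]
        refine Finset.sum_congr rfl fun i _ => ?_
        rw [integral_indicator_one measurableSet_uIoc, measureReal_def, Real.volume_uIoc,
          ENNReal.toReal_ofReal (abs_nonneg _)]

theorem integral_abs_flow_le_matching_cost (r s : ι → ℝ) (σ : Equiv.Perm ι) :
    ∫ x, |flow r s x| ≤ ∑ i, |s (σ i) - r i| := by
  simpa only [flow_comp_perm, Function.comp_apply] using integral_abs_flow_le r (s ∘ σ)

lemma sum_indicator_Ioc_le_abs_flow_add (a b : ι → ℝ) (C : Finset ι) {F : Finset ι} {x : ℝ}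
    (hF : ∀ i ∉ F, x ∉ Ioc (b i) (a i)) :
    ∑ i ∈ C, (Ioc (a i) (b i)).indicator 1 x ≤ |flow a b x| + #F := by
  have hnn (t : Set ℝ) : 0 ≤ t.indicator (1 : ℝ → ℝ) x :=
    indicator_nonneg (fun _ _ => zero_le_one) x
  have hle (t : Set ℝ) : t.indicator (1 : ℝ → ℝ) x ≤ 1 :=
    indicator_le_self' (fun _ _ => zero_le_one) x
  calc ∑ i ∈ C, (Ioc (a i) (b i)).indicator 1 x ≤ ∑ i, (Ioc (a i) (b i)).indicator 1 x :=
        sum_le_sum_of_subset_of_nonneg (subset_univ C) fun i _ _ => hnn _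
    _ = flow a b x + ∑ i, (Ioc (b i) (a i)).indicator 1 x := by
        simp only [flow, sum_sub_distrib, sub_add_cancel]
    _ = flow a b x + ∑ i ∈ F, (Ioc (b i) (a i)).indicator 1 x := by
        rw [sum_subset (subset_univ F) fun i _ hi => indicator_of_notMem (hF i hi) _]
    _ ≤ |flow a b x| + ∑ i ∈ F, (1 : ℝ) :=
        add_le_add (le_abs_self _) (sum_le_sum fun i _ => hle _)
    _ = |flow a b x| + #F := by simp

theorem sum_sub_le_setIntegral_abs_flow_add (a b : ι → ℝ) {U : Set ℝ} (hU : MeasurableSet U)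
    (hUfin : volume U ≠ ∞) {C F : Finset ι} (hC : ∀ i ∈ C, Ioc (a i) (b i) ⊆ U)
    (hF : ∀ i ∉ F, Disjoint (Ioc (b i) (a i)) U) :
    ∑ i ∈ C, (b i - a i) ≤ (∫ x in U, |flow a b x|) + #F * volume.real U := by
  have hint (i : ι) : IntegrableOn ((Ioc (a i) (b i)).indicator (1 : ℝ → ℝ)) U :=
    (integrable_indicator_Ioc (a i) (b i)).integrableOn
  have habs : IntegrableOn (fun x => |flow a b x|) U := (integrable_flow a b).abs.integrableOn
  calc ∑ i ∈ C, (b i - a i) ≤ ∑ i ∈ C, ∫ x in U, (Ioc (a i) (b i)).indicator 1 x := by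
        refine sum_le_sum fun i hi => ?_
        rw [integral_indicator_one measurableSet_Ioc, measureReal_restrict_apply measurableSet_Ioc,
          inter_eq_left.2 (hC i hi), Real.volume_real_Ioc]
        exact le_max_left _ _
    _ = ∫ x in U, ∑ i ∈ C, (Ioc (a i) (b i)).indicator 1 x :=
        (integral_finsetSum _ fun i _ => hint i).symm
    _ ≤ ∫ x in U, (|flow a b x| + #F) :=
        setIntegral_mono_on (integrable_finsetSum _ fun i _ => hint i)
          (habs.add (integrableOn_const hUfin)) hU fun x hx =>
          sum_indicator_Ioc_le_abs_flow_add a b C fun i hi hxi =>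
            Set.disjoint_left.1 (hF i hi) hxi hx
    _ = (∫ x in U, |flow a b x|) + #F * volume.real U := by
        rw [integral_add habs (integrableOn_const hUfin), setIntegral_const, smul_eq_mul, mul_comm]

end Flow

section WellSeparated

variable {ε Δ : ℝ}

lemma le_abs_sub_of_far {x y : ℝ} (h : inIL ε Δ x ∧ inIR ε Δ y ∨ inIR ε Δ x ∧ inIL ε Δ y) :
    (1 - 2 * ε) * Δ ≤ |x - y| := by
  rcases h with ⟨hx, hy⟩ | ⟨hx, hy⟩
  · exact le_abs.2 (Or.inr (by linarith [hx.2, hy.1]))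
  · exact le_abs.2 (Or.inl (by linarith [hx.1, hy.2]))

lemma abs_sub_bounds_of_medium (hεΔ : 0 ≤ ε * Δ) {x y : ℝ}
    (hx : (-(ε * Δ) ≤ x ∧ x ≤ 0) ∨ (Δ ≤ x ∧ x ≤ (1 + ε) * Δ))
    (hy : ε * Δ ≤ y ∧ y ≤ (1 - ε) * Δ) : ε * Δ ≤ |x - y| ∧ |x - y| ≤ Δ := by
  rcases hx with hx | hx
  · rw [abs_of_nonpos (by linarith)]; constructor <;> linarith
  · rw [abs_of_nonneg (by linarith)]; constructor <;> linarith

lemma disjoint_Ioc_IR_of_not_far (hεΔ : 0 ≤ ε * Δ) {x y : ℝ}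
    (hx : (-(ε * Δ) ≤ x ∧ x ≤ 0) ∨ (Δ ≤ x ∧ x ≤ (1 + ε) * Δ)) (hy : y ≤ (1 + ε) * Δ)
    (haligned : inIR ε Δ x ∧ inIR ε Δ y → y ≤ x) (hfar : ¬(inIL ε Δ x ∧ inIR ε Δ y)) :
    Disjoint (Ioc x y) (Ioc ((1 - ε) * Δ) ((1 + ε) * Δ)) := by
  refine Set.disjoint_left.2 fun z hz hzR => ?_
  have hyR : inIR ε Δ y := ⟨by linarith [hz.2, hzR.1], hy⟩
  rcases hx with hx | hx
  · exact hfar ⟨⟨hx.1, by linarith⟩, hyR⟩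
  · linarith [haligned ⟨⟨by linarith, hx.2⟩, hyR⟩, hz.1, hz.2]

lemma disjoint_Ioc_IL_of_not_far (hεΔ : 0 ≤ ε * Δ) {x y : ℝ}
    (hx : (-(ε * Δ) ≤ x ∧ x ≤ 0) ∨ (Δ ≤ x ∧ x ≤ (1 + ε) * Δ)) (hy : -(ε * Δ) ≤ y)
    (haligned : inIL ε Δ x ∧ inIL ε Δ y → x ≤ y) (hfar : ¬(inIR ε Δ x ∧ inIL ε Δ y)) :
    Disjoint (Ioc y x) (Ioc (-(ε * Δ)) (ε * Δ)) := by
  refine Set.disjoint_left.2 fun z hz hzL => ?_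
  have hyL : inIL ε Δ y := ⟨hy, by linarith [hz.1, hzL.2]⟩
  rcases hx with hx | hx
  · linarith [haligned ⟨⟨hx.1, by linarith⟩, hyL⟩, hz.1, hz.2]
  · exact hfar ⟨⟨by linarith, hx.2⟩, hyL⟩

variable {ι : Type*} [Fintype ι] (ε Δ) (s r : ι → ℝ) (π : Equiv.Perm ι)

noncomputable abbrev leftCloseEdges : Finset ι := {i | inIL ε Δ (s (π i)) ∧ inIL ε Δ (r i)}

noncomputable abbrev rightCloseEdges : Finset ι := {i | inIR ε Δ (s (π i)) ∧ inIR ε Δ (r i)}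

noncomputable abbrev closeEdges : Finset ι :=
  {i | inIL ε Δ (s (π i)) ∧ inIL ε Δ (r i) ∨ inIR ε Δ (s (π i)) ∧ inIR ε Δ (r i)}

noncomputable abbrev farEdges : Finset ι :=
  {i | inIL ε Δ (s (π i)) ∧ inIR ε Δ (r i) ∨ inIR ε Δ (s (π i)) ∧ inIL ε Δ (r i)}

noncomputable abbrev mediumEdges : Finset ι := {i | ε * Δ ≤ r i ∧ r i ≤ (1 - ε) * Δ}

variable {ε Δ s r}

lemma card_far_mul_le (hε0 : 0 ≤ ε) (hε : 2 * ε < 1) :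
    #(farEdges ε Δ s r π) * (4 * (ε * Δ)) ≤
      4 * ε / (1 - 2 * ε) * ∑ i ∈ farEdges ε Δ s r π, |s (π i) - r i| := by
  have hfar : #(farEdges ε Δ s r π) * ((1 - 2 * ε) * Δ) ≤
      ∑ i ∈ farEdges ε Δ s r π, |s (π i) - r i| := by
    rw [← nsmul_eq_mul]
    exact card_nsmul_le_sum _ _ _ fun i hi => le_abs_sub_of_far (mem_filter.1 hi).2
  rw [div_mul_eq_mul_div, le_div_iff₀ (by linarith)]
  linarith [mul_le_mul_of_nonneg_left hfar (by positivity : (0 : ℝ) ≤ 4 * ε)]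

lemma sum_medium_le (hεΔ : 0 ≤ ε * Δ)
    (hsep_s : ∀ i, (-(ε * Δ) ≤ s i ∧ s i ≤ 0) ∨ (Δ ≤ s i ∧ s i ≤ (1 + ε) * Δ)) :
    ∑ i ∈ mediumEdges ε Δ r, |s (π i) - r i| ≤ #(mediumEdges ε Δ r) * Δ := by
  rw [← nsmul_eq_mul]
  exact sum_le_card_nsmul _ _ _ fun i hi =>
    (abs_sub_bounds_of_medium hεΔ (hsep_s _) (mem_filter.1 hi).2).2

lemma card_medium_mul_le (hεΔ : 0 ≤ ε * Δ)
    (hsep_s : ∀ i, (-(ε * Δ) ≤ s i ∧ s i ≤ 0) ∨ (Δ ≤ s i ∧ s i ≤ (1 + ε) * Δ)) :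
    #(mediumEdges ε Δ r) * (ε * Δ) ≤ ∑ i, |s (π i) - r i| :=
  calc #(mediumEdges ε Δ r) * (ε * Δ) ≤ ∑ i ∈ mediumEdges ε Δ r, |s (π i) - r i| := by
        rw [← nsmul_eq_mul]
        exact card_nsmul_le_sum _ _ _ fun i hi =>
          (abs_sub_bounds_of_medium hεΔ (hsep_s _) (mem_filter.1 hi).2).1
    _ ≤ ∑ i, |s (π i) - r i| :=
        sum_le_sum_of_subset_of_nonneg (subset_univ _) fun _ _ _ => abs_nonneg _

lemma sum_leftCloseEdges_le (hεΔ : 0 ≤ ε * Δ)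
    (hsep_s : ∀ i, (-(ε * Δ) ≤ s i ∧ s i ≤ 0) ∨ (Δ ≤ s i ∧ s i ≤ (1 + ε) * Δ))
    (hr : ∀ i, -(ε * Δ) ≤ r i)
    (haligned : ∀ i, inIL ε Δ (s (π i)) ∧ inIL ε Δ (r i) → s (π i) ≤ r i) :
    ∑ i ∈ leftCloseEdges ε Δ s r π, |s (π i) - r i| ≤
      (∫ x in Ioc (-(ε * Δ)) (ε * Δ), |flow r s x|) + #(farEdges ε Δ s r π) * (2 * (ε * Δ)) :=
  calc ∑ i ∈ leftCloseEdges ε Δ s r π, |s (π i) - r i|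
      = ∑ i ∈ leftCloseEdges ε Δ s r π, (r i - (s ∘ π) i) := sum_congr rfl fun i hi => by
        rw [abs_sub_comm, abs_of_nonneg (sub_nonneg.2 (haligned i (mem_filter.1 hi).2))]; rfl
    _ ≤ (∫ x in Ioc (-(ε * Δ)) (ε * Δ), |flow (s ∘ π) r x|) +
          #(farEdges ε Δ s r π) * volume.real (Ioc (-(ε * Δ)) (ε * Δ)) :=
        sum_sub_le_setIntegral_abs_flow_add (s ∘ π) r measurableSet_Ioc measure_Ioc_lt_top.ne
          (fun i hi => Ioc_subset_Ioc (mem_filter.1 hi).2.1.1 (mem_filter.1 hi).2.2.2)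
          fun i hi => disjoint_Ioc_IL_of_not_far hεΔ (hsep_s _) (hr i) (haligned i)
            fun h => hi (mem_filter.2 ⟨mem_univ _, Or.inr h⟩)
    _ = _ := by
        rw [flow_swap, flow_comp_perm, Real.volume_real_Ioc_of_le (by linarith)]
        simp only [Pi.neg_apply, abs_neg]
        ring

lemma sum_rightCloseEdges_le (hεΔ : 0 ≤ ε * Δ)
    (hsep_s : ∀ i, (-(ε * Δ) ≤ s i ∧ s i ≤ 0) ∨ (Δ ≤ s i ∧ s i ≤ (1 + ε) * Δ))
    (hr : ∀ i, r i ≤ (1 + ε) * Δ)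
    (haligned : ∀ i, inIR ε Δ (s (π i)) ∧ inIR ε Δ (r i) → r i ≤ s (π i)) :
    ∑ i ∈ rightCloseEdges ε Δ s r π, |s (π i) - r i| ≤
      (∫ x in Ioc ((1 - ε) * Δ) ((1 + ε) * Δ), |flow r s x|) +
        #(farEdges ε Δ s r π) * (2 * (ε * Δ)) :=
  calc ∑ i ∈ rightCloseEdges ε Δ s r π, |s (π i) - r i|
      = ∑ i ∈ rightCloseEdges ε Δ s r π, ((s ∘ π) i - r i) := sum_congr rfl fun i hi => by
        rw [abs_of_nonneg (sub_nonneg.2 (haligned i (mem_filter.1 hi).2))]; rfl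
    _ ≤ (∫ x in Ioc ((1 - ε) * Δ) ((1 + ε) * Δ), |flow r (s ∘ π) x|) +
          #(farEdges ε Δ s r π) * volume.real (Ioc ((1 - ε) * Δ) ((1 + ε) * Δ)) :=
        sum_sub_le_setIntegral_abs_flow_add r (s ∘ π) measurableSet_Ioc measure_Ioc_lt_top.ne
          (fun i hi => Ioc_subset_Ioc (mem_filter.1 hi).2.2.1 (mem_filter.1 hi).2.1.2)
          fun i hi => disjoint_Ioc_IR_of_not_far hεΔ (hsep_s _) (hr i) (haligned i)
            fun h => hi (mem_filter.2 ⟨mem_univ _, Or.inl h⟩)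
    _ = _ := by
        rw [flow_comp_perm, Real.volume_real_Ioc_of_le (by linarith)]
        ring

theorem sum_closeEdges_le (hεΔ : 0 ≤ ε * Δ) (hgap : ε * Δ < (1 - ε) * Δ)
    (hsep_s : ∀ i, (-(ε * Δ) ≤ s i ∧ s i ≤ 0) ∨ (Δ ≤ s i ∧ s i ≤ (1 + ε) * Δ))
    (hsep_r : ∀ i, -(ε * Δ) ≤ r i ∧ r i ≤ (1 + ε) * Δ)
    (haligned : ∀ i,
      (inIR ε Δ (s (π i)) ∧ inIR ε Δ (r i) → r i ≤ s (π i)) ∧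
      (inIL ε Δ (s (π i)) ∧ inIL ε Δ (r i) → s (π i) ≤ r i)) :
    ∑ i ∈ closeEdges ε Δ s r π, |s (π i) - r i| ≤
      (∫ x, |flow r s x|) + #(farEdges ε Δ s r π) * (4 * (ε * Δ)) := by
  classical
  have hdisj : Disjoint (leftCloseEdges ε Δ s r π) (rightCloseEdges ε Δ s r π) :=
    disjoint_filter.2 fun i _ hL hR => by linarith [hL.2.2, hR.2.1]
  unfold closeEdges
  rw [filter_or, sum_union hdisj]
  linarith [sum_leftCloseEdges_le π hεΔ hsep_s (fun i => (hsep_r i).1) fun i => (haligned i).2,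
    sum_rightCloseEdges_le π hεΔ hsep_s (fun i => (hsep_r i).2) fun i => (haligned i).1,
    setIntegral_add_setIntegral_le_integral (integrable_flow r s).abs (fun x => abs_nonneg _)
      (Ioc_disjoint_Ioc_of_le (a := -(ε * Δ)) (d := (1 + ε) * Δ) hgap.le) measurableSet_Ioc]

end WellSeparated

theorem well_aligned_close_med_bound_general (n : ℕ) (s r : Fin n → ℝ)
    (Δ ε : ℝ) (hΔ : 0 < Δ) (hε0 : 0 < ε) (hε : ε ≤ 1 / 8)
    (hsep_s : ∀ i, (-(ε * Δ) ≤ s i ∧ s i ≤ 0) ∨ (Δ ≤ s i ∧ s i ≤ (1 + ε) * Δ))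
    (hsep_r : ∀ i, -(ε * Δ) ≤ r i ∧ r i ≤ (1 + ε) * Δ)
    (π : Equiv.Perm (Fin n))
    (haligned : ∀ i,
      (inIR ε Δ (s (π i)) ∧ inIR ε Δ (r i) → r i ≤ s (π i)) ∧
      (inIL ε Δ (s (π i)) ∧ inIL ε Δ (r i) → s (π i) ≤ r i)) :
    (∑ i ∈ Finset.univ.filter (fun i =>
        (inIL ε Δ (s (π i)) ∧ inIL ε Δ (r i)) ∨
        (inIR ε Δ (s (π i)) ∧ inIR ε Δ (r i))), |s (π i) - r i|) +
      (∑ i ∈ Finset.univ.filter (fun i =>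
        ε * Δ ≤ r i ∧ r i ≤ (1 - ε) * Δ), |s (π i) - r i|) ≤
    (2 / ε + 3) * (⨅ σ : Equiv.Perm (Fin n), ∑ i, |s (σ i) - r i|) +
      (4 * ε / (1 - 2 * ε)) *
        ∑ i ∈ Finset.univ.filter (fun i =>
          (inIL ε Δ (s (π i)) ∧ inIR ε Δ (r i)) ∨
          (inIR ε Δ (s (π i)) ∧ inIL ε Δ (r i))), |s (π i) - r i| := by
  have hεΔ : 0 ≤ ε * Δ := by positivity
  have hgap : ε * Δ < (1 - ε) * Δ := by nlinarith
  set wopt := ⨅ σ : Equiv.Perm (Fin n), ∑ i, |s (σ i) - r i|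
  have hopt : 0 ≤ wopt := le_ciInf fun σ => sum_nonneg fun i _ => abs_nonneg _
  have hflow : ∫ x, |flow r s x| ≤ wopt := le_ciInf (integral_abs_flow_le_matching_cost r s)
  have hcard_med : #(mediumEdges ε Δ r) * (ε * Δ) ≤ wopt :=
    le_ciInf fun σ => card_medium_mul_le σ hεΔ hsep_s
  have hmed : ∑ i ∈ mediumEdges ε Δ r, |s (π i) - r i| ≤ wopt / ε := by
    rw [le_div_iff₀ hε0]
    linarith [mul_le_mul_of_nonneg_right (sum_medium_le (r := r) π hεΔ hsep_s) hε0.le]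
  have hcoef : (2 / ε + 3) * wopt = 2 * (wopt / ε) + 3 * wopt := by ring
  linarith [sum_closeEdges_le π hεΔ hgap hsep_s hsep_r haligned,
    card_far_mul_le (s := s) (r := r) (Δ := Δ) π hε0.le (by linarith), div_nonneg hopt hε0.le]

/-- For an `ε`-well-separated input (with `0 < ε ≤ 1/8`) and an
`ε`-well-aligned perfect matching `π`,
`w_close + w_med ≤ (2/ε + 3)·w_opt + (4ε/(1−2ε))·w_far`. -/
theorem well_aligned_close_med_bound (n : ℕ) (hn : 1 ≤ n) (s r : Fin n → ℝ)
    (Δ ε : ℝ) (hΔ : 0 < Δ) (hε0 : 0 < ε) (hε : ε ≤ 1 / 8)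
    (hsep_s : ∀ i, (-(ε * Δ) ≤ s i ∧ s i ≤ 0) ∨ (Δ ≤ s i ∧ s i ≤ (1 + ε) * Δ))
    (hsep_r : ∀ i, -(ε * Δ) ≤ r i ∧ r i ≤ (1 + ε) * Δ)
    (π : Equiv.Perm (Fin n))
    (haligned : ∀ i,
      (inIR ε Δ (s (π i)) ∧ inIR ε Δ (r i) → r i ≤ s (π i)) ∧
      (inIL ε Δ (s (π i)) ∧ inIL ε Δ (r i) → s (π i) ≤ r i)) :
    (∑ i ∈ Finset.univ.filter (fun i =>
        (inIL ε Δ (s (π i)) ∧ inIL ε Δ (r i)) ∨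
        (inIR ε Δ (s (π i)) ∧ inIR ε Δ (r i))), |s (π i) - r i|) +
      (∑ i ∈ Finset.univ.filter (fun i =>
        ε * Δ ≤ r i ∧ r i ≤ (1 - ε) * Δ), |s (π i) - r i|) ≤
    (2 / ε + 3) * (⨅ σ : Equiv.Perm (Fin n), ∑ i, |s (σ i) - r i|) +
      (4 * ε / (1 - 2 * ε)) *
        ∑ i ∈ Finset.univ.filter (fun i =>
          (inIL ε Δ (s (π i)) ∧ inIR ε Δ (r i)) ∨
          (inIR ε Δ (s (π i)) ∧ inIL ε Δ (r i))), |s (π i) - r i| :=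
  well_aligned_close_med_bound_general n s r Δ ε hΔ hε0 hε hsep_s hsep_r π haligned
end

section
/- Let 0 < ε ≤ 1/8 and let the input be ε-well-separated. Then for any perfect matching π, the total cost of the medium edges satisfies w_med ≤ (1/ε) · w_opt. -/
/-- For an `ε`-well-separated input (with `0 < ε ≤ 1/8`) and any
perfect matching `π`, the total cost of the medium edges satisfies
`w_med ≤ (1/ε) · w_opt`. -/
theorem medium_edges_bound (n : ℕ) (hn : 1 ≤ n) (s r : Fin n → ℝ)
    (Δ ε : ℝ) (hΔ : 0 < Δ) (hε0 : 0 < ε) (hε : ε ≤ 1 / 8)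
    (hsep_s : ∀ i, (-(ε * Δ) ≤ s i ∧ s i ≤ 0) ∨ (Δ ≤ s i ∧ s i ≤ (1 + ε) * Δ))
    (hsep_r : ∀ i, -(ε * Δ) ≤ r i ∧ r i ≤ (1 + ε) * Δ)
    (π : Equiv.Perm (Fin n)) :
    ∑ i ∈ Finset.univ.filter (fun i => ε * Δ ≤ r i ∧ r i ≤ (1 - ε) * Δ),
        |s (π i) - r i| ≤
      (1 / ε) * (⨅ σ : Equiv.Perm (Fin n), ∑ i, |s (σ i) - r i|) := by
  set M := Finset.univ.filter (fun i => ε * Δ ≤ r i ∧ r i ≤ (1 - ε) * Δ) with hM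
  -- per-edge bounds for medium requests
  have key : ∀ j i, i ∈ M → ε * Δ ≤ |s j - r i| ∧ |s j - r i| ≤ Δ := by
    intro j i hi
    simp only [hM, Finset.mem_filter] at hi
    obtain ⟨-, h1, h2⟩ := hi
    rcases hsep_s j with ⟨ha, hb⟩ | ⟨ha, hb⟩
    · have : s j - r i ≤ 0 := by nlinarith
      rw [abs_of_nonpos this]
      constructor <;> nlinarith
    · have : 0 ≤ s j - r i := by nlinarith
      rw [abs_of_nonneg this]
      constructor <;> nlinarith
  -- pick the minimizer
  obtain ⟨σ₀, hσ₀⟩ := Finite.exists_min (fun σ : Equiv.Perm (Fin n) => ∑ i, |s (σ i) - r i|)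
  have hinf : (∑ i, |s (σ₀ i) - r i|) ≤ ⨅ σ : Equiv.Perm (Fin n), ∑ i, |s (σ i) - r i| :=
    le_ciInf hσ₀
  have hub : ∑ i ∈ M, |s (π i) - r i| ≤ M.card * Δ := by
    calc ∑ i ∈ M, |s (π i) - r i| ≤ ∑ _i ∈ M, Δ :=
          Finset.sum_le_sum fun i hi => (key (π i) i hi).2
      _ = M.card * Δ := by rw [Finset.sum_const, nsmul_eq_mul]
  have hlb : (M.card : ℝ) * (ε * Δ) ≤ ∑ i, |s (σ₀ i) - r i| := by
    calc (M.card : ℝ) * (ε * Δ) = ∑ _i ∈ M, ε * Δ := by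
          rw [Finset.sum_const, nsmul_eq_mul]
      _ ≤ ∑ i ∈ M, |s (σ₀ i) - r i| :=
          Finset.sum_le_sum fun i hi => (key (σ₀ i) i hi).1
      _ ≤ ∑ i, |s (σ₀ i) - r i| :=
          Finset.sum_le_sum_of_subset_of_nonneg (Finset.filter_subset _ _)
            (fun i _ _ => abs_nonneg _)
  have hεinv : (0:ℝ) < 1 / ε := by positivity
  calc ∑ i ∈ M, |s (π i) - r i| ≤ M.card * Δ := hub
    _ = (1 / ε) * ((M.card : ℝ) * (ε * Δ)) := by field_simp
    _ ≤ (1 / ε) * ∑ i, |s (σ₀ i) - r i| := by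
        exact mul_le_mul_of_nonneg_left hlb hεinv.le
    _ ≤ (1 / ε) * (⨅ σ : Equiv.Perm (Fin n), ∑ i, |s (σ i) - r i|) :=
        mul_le_mul_of_nonneg_left hinf hεinv.le
end

section
/- Let 0 < ε ≤ 1/8, let the input be ε-well-separated, and let π be a perfect matching. Let C be the set of indices of close and far edges of π. Then the minimum cost of a matching of the endpoints of C among themselves satisfies min_{μ : C → C bijection} ∑_{i ∈ C} |s(π(μ(i))) − r(i)| ≤ (1/ε + 3) · w_opt. -/
/-- Index `i` is a close edge of the matching `π`. -/
abbrev isCloseEdge (n : ℕ) (s r : Fin n → ℝ) (ε Δ : ℝ) (π : Equiv.Perm (Fin n))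
    (i : Fin n) : Prop :=
  (inIL ε Δ (s (π i)) ∧ inIL ε Δ (r i)) ∨ (inIR ε Δ (s (π i)) ∧ inIR ε Δ (r i))

/-- Index `i` is a far edge of the matching `π`. -/
abbrev isFarEdge (n : ℕ) (s r : Fin n → ℝ) (ε Δ : ℝ) (π : Equiv.Perm (Fin n))
    (i : Fin n) : Prop :=
  (inIL ε Δ (s (π i)) ∧ inIR ε Δ (r i)) ∨ (inIR ε Δ (s (π i)) ∧ inIL ε Δ (r i))

/-! Fix an optimal matching `σ₀`. An index outside `C` is a medium edge: its request lies in
`(εΔ, (1 - ε)Δ)`, farther than `εΔ` from every server, so there are at most `w_opt / (εΔ)` of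
them. Rematch `C` by following `σ₀` (pulled back through `π`) wherever it stays inside `C`, and
pair the remaining indices of `C` arbitrarily: these are at most as many as the medium edges and
each costs at most the diameter `(1 + 2ε)Δ`, so the total is at most
`w_opt + (1/ε + 2) w_opt`. -/

open Finset

section Rematch

variable {α : Type*} [Fintype α] (P : α → Prop) [DecidablePred P]

theorem exists_perm_subtype_coe_apply_eq (ρ : Equiv.Perm α) :
    ∃ μ : Equiv.Perm {x // P x}, ∀ i : {x // P x}, P (ρ i) → (μ i : α) = ρ i := by
  have hcard : Fintype.card {x // P x} = #{x | P x} := Fintype.card_subtype P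
  have hmaps : Set.MapsTo (fun i : {x // P x} => ρ i) {i | P (ρ i)} (univ.filter P : Finset α) :=
    fun i hi => by simpa using hi
  have hinj : Set.InjOn (fun i : {x // P x} => ρ i) {i | P (ρ i)} :=
    fun i _ j _ h => Subtype.ext (ρ.injective h)
  obtain ⟨g, hg⟩ := hmaps.exists_equiv_extend_of_card_eq hcard hinj
  exact ⟨g.trans (Equiv.subtypeEquivRight fun x => by simp), fun i hi => hg i hi⟩

theorem card_filter_and_not_comp_le (ρ : Equiv.Perm α) :
    #{i | P i ∧ ¬ P (ρ i)} ≤ #{i | ¬ P i} :=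
  card_le_card_of_injOn ρ (fun i hi => by simp_all) ρ.injective.injOn

theorem exists_perm_subtype_sum_le (c : α → α → ℝ) (σ : Equiv.Perm α) {D : ℝ} (hD : 0 ≤ D)
    (hc : ∀ i j, 0 ≤ c i j) (hcD : ∀ i j, P i → P j → c i j ≤ D) :
    ∃ μ : Equiv.Perm {x // P x},
      ∑ i : {x // P x}, c i (μ i) ≤ ∑ i, c i (σ i) + #{i | ¬ P i} * D := by
  obtain ⟨μ, hμ⟩ := exists_perm_subtype_coe_apply_eq P σ
  refine ⟨μ, ?_⟩
  have hpt : ∀ i : {x // P x}, c i (μ i) ≤ if P (σ i) then c i (σ i) else D := by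
    intro i
    split_ifs with h
    · rw [hμ i h]
    · exact hcD i (μ i) i.2 (μ i).2
  calc ∑ i : {x // P x}, c i (μ i) ≤ ∑ i : {x // P x}, if P (σ i) then c i (σ i) else D :=
        sum_le_sum fun i _ => hpt i
    _ = ∑ i with P i, if P (σ i) then c i (σ i) else D :=
        (sum_subtype _ (fun x => by simp) fun i => if P (σ i) then c i (σ i) else D).symm
    _ = ∑ i with P i ∧ P (σ i), c i (σ i) + #{i | P i ∧ ¬ P (σ i)} * D := by
        rw [sum_ite, sum_const, nsmul_eq_mul, filter_filter, filter_filter]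
    _ ≤ ∑ i, c i (σ i) + #{i | ¬ P i} * D := by
        gcongr ?_ + ?_ * D
        · exact sum_le_univ_sum_of_nonneg fun i => hc i (σ i)
        · exact_mod_cast card_filter_and_not_comp_le P σ

end Rematch

theorem card_filter_mul_le_sum {α : Type*} [Fintype α] (Q : α → Prop) [DecidablePred Q]
    (f : α → ℝ) {d : ℝ} (hf : ∀ i, 0 ≤ f i) (hd : ∀ i, Q i → d ≤ f i) :
    #{i | Q i} * d ≤ ∑ i, f i :=
  calc #{i | Q i} * d = ∑ i with Q i, d := by rw [sum_const, nsmul_eq_mul]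
    _ ≤ ∑ i with Q i, f i := sum_le_sum fun i hi => hd i (mem_filter.1 hi).2
    _ ≤ ∑ i, f i := sum_le_univ_sum_of_nonneg hf

section WellSeparated

variable {ε Δ x : ℝ}

theorem mem_Icc_of_wellSeparated (hΔ : 0 ≤ Δ) (hεΔ : 0 ≤ ε * Δ)
    (hx : (-(ε * Δ) ≤ x ∧ x ≤ 0) ∨ (Δ ≤ x ∧ x ≤ (1 + ε) * Δ)) :
    x ∈ Set.Icc (-(ε * Δ)) ((1 + ε) * Δ) := by
  rcases hx with ⟨h1, h2⟩ | ⟨h1, h2⟩ <;> constructor <;> linarith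

theorem inIL_or_inIR_of_wellSeparated (hεΔ : 0 ≤ ε * Δ)
    (hx : (-(ε * Δ) ≤ x ∧ x ≤ 0) ∨ (Δ ≤ x ∧ x ≤ (1 + ε) * Δ)) :
    inIL ε Δ x ∨ inIR ε Δ x := by
  rcases hx with ⟨h1, h2⟩ | ⟨h1, h2⟩
  · exact Or.inl ⟨h1, by linarith⟩
  · exact Or.inr ⟨by linarith, h2⟩

theorem le_abs_sub_of_wellSeparated_of_medium {y : ℝ}
    (hx : (-(ε * Δ) ≤ x ∧ x ≤ 0) ∨ (Δ ≤ x ∧ x ≤ (1 + ε) * Δ))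
    (hy : ε * Δ < y ∧ y < (1 - ε) * Δ) : ε * Δ ≤ |x - y| := by
  rcases hx with ⟨-, hx⟩ | ⟨hx, -⟩
  · exact (neg_le_abs _).trans' (by linarith)
  · exact (le_abs_self _).trans' (by linarith)

theorem medium_of_not_isCloseEdge_or_isFarEdge {n : ℕ} {s r : Fin n → ℝ}
    {π : Equiv.Perm (Fin n)} {i : Fin n} (hs : inIL ε Δ (s (π i)) ∨ inIR ε Δ (s (π i)))
    (hr : -(ε * Δ) ≤ r i ∧ r i ≤ (1 + ε) * Δ)
    (h : ¬ (isCloseEdge n s r ε Δ π i ∨ isFarEdge n s r ε Δ π i)) :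
    ε * Δ < r i ∧ r i < (1 - ε) * Δ := by
  constructor <;> by_contra! hri <;> tauto

end WellSeparated

theorem close_far_rematch_bound_general (n : ℕ) (s r : Fin n → ℝ)
    (Δ ε : ℝ) (hΔ : 0 < Δ) (hε0 : 0 < ε)
    (hsep_s : ∀ i, (-(ε * Δ) ≤ s i ∧ s i ≤ 0) ∨ (Δ ≤ s i ∧ s i ≤ (1 + ε) * Δ))
    (hsep_r : ∀ i, -(ε * Δ) ≤ r i ∧ r i ≤ (1 + ε) * Δ)
    (π : Equiv.Perm (Fin n)) :
    (⨅ μ : Equiv.Perm {i : Fin n //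
        isCloseEdge n s r ε Δ π i ∨ isFarEdge n s r ε Δ π i},
      ∑ i : {i : Fin n // isCloseEdge n s r ε Δ π i ∨ isFarEdge n s r ε Δ π i},
        |s (π (μ i).1) - r i.1|) ≤
      (1 / ε + 3) * (⨅ σ : Equiv.Perm (Fin n), ∑ i, |s (σ i) - r i|) := by
  classical
  set P := fun i => isCloseEdge n s r ε Δ π i ∨ isFarEdge n s r ε Δ π i
  have hεΔ : 0 ≤ ε * Δ := by positivity
  obtain ⟨σ₀, hσ₀⟩ :=
    exists_eq_ciInf_of_finite (f := fun σ : Equiv.Perm (Fin n) => ∑ i, |s (σ i) - r i|)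
  set w₀ := ∑ i, |s (σ₀ i) - r i|
  have hmedium : #{i | ¬ P i} * (ε * Δ) ≤ w₀ :=
    card_filter_mul_le_sum _ _ (fun i => abs_nonneg _) fun i hi =>
      le_abs_sub_of_wellSeparated_of_medium (hsep_s (σ₀ i)) <|
        medium_of_not_isCloseEdge_or_isFarEdge
          (inIL_or_inIR_of_wellSeparated hεΔ (hsep_s (π i))) (hsep_r i) hi
  obtain ⟨μ, hμ⟩ := exists_perm_subtype_sum_le P (fun i j => |s (π j) - r i|) (π.symm * σ₀)
    (by linarith) (fun _ _ => abs_nonneg _) fun i j _ _ =>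
      Real.dist_le_of_mem_Icc (mem_Icc_of_wellSeparated hΔ.le hεΔ (hsep_s (π j))) (hsep_r i)
  simp only [Equiv.Perm.coe_mul, Function.comp_apply, Equiv.apply_symm_apply] at hμ
  calc _ ≤ ∑ i : {x // P x}, |s (π (μ i)) - r i| := ciInf_le (Finite.bddBelow_range _) μ
    _ ≤ w₀ + #{i | ¬ P i} * ((1 + ε) * Δ - -(ε * Δ)) := hμ
    _ = w₀ + (1 / ε + 2) * (#{i | ¬ P i} * (ε * Δ)) := by field_simp; ring
    _ ≤ w₀ + (1 / ε + 2) * w₀ := by gcongr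
    _ = (1 / ε + 3) * (⨅ σ : Equiv.Perm (Fin n), ∑ i, |s (σ i) - r i|) := by rw [← hσ₀]; ring

/-- For an `ε`-well-separated input (with `0 < ε ≤ 1/8`) and a
perfect matching `π`, let `C` be the set of indices of close and far edges.
Then the minimum, over bijections `μ : C → C`, of the cost of rematching the
endpoints of `C` among themselves is at most `(1/ε + 3) · w_opt`. -/
theorem close_far_rematch_bound (n : ℕ) (hn : 1 ≤ n) (s r : Fin n → ℝ)
    (Δ ε : ℝ) (hΔ : 0 < Δ) (hε0 : 0 < ε) (hε : ε ≤ 1 / 8)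
    (hsep_s : ∀ i, (-(ε * Δ) ≤ s i ∧ s i ≤ 0) ∨ (Δ ≤ s i ∧ s i ≤ (1 + ε) * Δ))
    (hsep_r : ∀ i, -(ε * Δ) ≤ r i ∧ r i ≤ (1 + ε) * Δ)
    (π : Equiv.Perm (Fin n)) :
    (⨅ μ : Equiv.Perm {i : Fin n //
        isCloseEdge n s r ε Δ π i ∨ isFarEdge n s r ε Δ π i},
      ∑ i : {i : Fin n // isCloseEdge n s r ε Δ π i ∨ isFarEdge n s r ε Δ π i},
        |s (π (μ i).1) - r i.1|) ≤
      (1 / ε + 3) * (⨅ σ : Equiv.Perm (Fin n), ∑ i, |s (σ i) - r i|) :=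
  close_far_rematch_bound_general n s r Δ ε hΔ hε0 hsep_s hsep_r π
end

section
/- Let 0 < ε ≤ 1/8, let the input be ε-well-separated, and let π be a perfect matching with close-edge index set Cl, far-edge index set F, and C = Cl ∪ F. Let opt_close = min over bijections μ : Cl → Cl of ∑_{i ∈ Cl} |s(π(μ(i))) − r(i)|, and opt_cf = min over bijections μ : C → C of ∑_{i ∈ C} |s(π(μ(i))) − r(i)|. Then opt_close − 4εΔ·|F| ≤ opt_cf. -/
open MeasureTheory Set

lemma indicator_Ici_sub_indicator_Ici {a b : ℝ} (h : a ≤ b) (t : ℝ) :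
    (Ici a).indicator (1 : ℝ → ℝ) t - (Ici b).indicator 1 t = (Ico a b).indicator 1 t := by
  rw [← Ici_sdiff_Ici, indicator_sdiff (Ici_subset_Ici.2 h), Pi.sub_apply]

lemma integrable_indicator_Ici_sub (a b : ℝ) :
    Integrable fun t => (Ici a).indicator (1 : ℝ → ℝ) t - (Ici b).indicator 1 t := by
  wlog h : a ≤ b generalizing a b
  · have := (this b a (le_of_not_ge h)).neg
    simpa only [Pi.neg_def, neg_sub] using this
  simp_rw [indicator_Ici_sub_indicator_Ici h]
  exact (integrable_indicator_iff measurableSet_Ico).2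
    (integrableOn_const measure_Ico_lt_top.ne)

lemma integral_abs_indicator_Ici_sub (a b : ℝ) :
    ∫ t, |(Ici a).indicator (1 : ℝ → ℝ) t - (Ici b).indicator 1 t| = |a - b| := by
  wlog h : a ≤ b generalizing a b
  · simpa only [abs_sub_comm] using this b a (le_of_not_ge h)
  have habs (t : ℝ) : |(Ico a b).indicator (1 : ℝ → ℝ) t| = (Ico a b).indicator 1 t :=
    abs_of_nonneg (indicator_nonneg (fun _ _ => zero_le_one) t)
  simp_rw [indicator_Ici_sub_indicator_Ici h, habs]
  rw [integral_indicator_one measurableSet_Ico, Real.volume_real_Ico_of_le h, abs_sub_comm,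
    abs_of_nonneg (sub_nonneg.2 h)]

lemma abs_indicator_Ici_sub_le_one (a b t : ℝ) :
    |(Ici a).indicator (1 : ℝ → ℝ) t - (Ici b).indicator 1 t| ≤ 1 := by
  simp only [indicator_apply]
  split_ifs <;> norm_num

lemma indicator_Ici_eq_of_ordConnected {S : Set ℝ} (hS : S.OrdConnected) {a b t : ℝ}
    (ha : a ∈ S) (hb : b ∈ S) (ht : t ∉ S) :
    (Ici a).indicator (1 : ℝ → ℝ) t = (Ici b).indicator 1 t := by
  have hab : a ≤ t ↔ b ≤ t :=
    ⟨fun hat => not_lt.1 fun htb => ht (hS.out ha hb ⟨hat, htb.le⟩),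
      fun hbt => not_lt.1 fun hta => ht (hS.out hb ha ⟨hbt, hta.le⟩)⟩
  simp only [indicator_apply, mem_Ici, hab]

section CountLE

variable {ι κ : Type*} [Fintype ι] [Fintype κ]

noncomputable def countLE (x : ι → ℝ) (t : ℝ) : ℝ := ∑ i, (Ici (x i)).indicator 1 t

lemma countLE_sub_countLE (x y : ι → ℝ) (t : ℝ) :
    countLE x t - countLE y t =
      ∑ i, ((Ici (x i)).indicator 1 t - (Ici (y i)).indicator 1 t) :=
  (Finset.sum_sub_distrib _ _).symm

lemma countLE_comp_equiv (x : ι → ℝ) (e : κ ≃ ι) : countLE (x ∘ e) = countLE x :=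
  funext fun t => e.sum_comp fun i => (Ici (x i)).indicator 1 t

lemma integrable_countLE_sub (x y : ι → ℝ) :
    Integrable fun t => countLE x t - countLE y t := by
  simp_rw [countLE_sub_countLE]
  exact integrable_finsetSum _ fun i _ => integrable_indicator_Ici_sub _ _

lemma abs_countLE_sub_le_card (x y : ι → ℝ) (t : ℝ) :
    |countLE x t - countLE y t| ≤ Fintype.card ι := by
  rw [countLE_sub_countLE]
  calc _ ≤ ∑ i, |(Ici (x i)).indicator (1 : ℝ → ℝ) t - (Ici (y i)).indicator 1 t| :=
        Finset.abs_sum_le_sum_abs _ _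
    _ ≤ ∑ _i : ι, (1 : ℝ) := Finset.sum_le_sum fun i _ => abs_indicator_Ici_sub_le_one _ _ _
    _ = Fintype.card ι := by simp

lemma integral_abs_countLE_sub_le (x y : ι → ℝ) :
    ∫ t, |countLE x t - countLE y t| ≤ ∑ i, |x i - y i| := by
  simp_rw [countLE_sub_countLE]
  calc _ ≤ ∫ t, ∑ i, |(Ici (x i)).indicator (1 : ℝ → ℝ) t - (Ici (y i)).indicator 1 t| :=
        integral_mono (integrable_finsetSum _ fun i _ => integrable_indicator_Ici_sub _ _).abs
          (integrable_finsetSum _ fun i _ => (integrable_indicator_Ici_sub _ _).abs)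
          fun t => Finset.abs_sum_le_sum_abs _ _
    _ = ∑ i, |x i - y i| := by
        rw [integral_finsetSum _ fun i _ => (integrable_indicator_Ici_sub _ _).abs]
        simp_rw [integral_abs_indicator_Ici_sub]

-- For sorted data no index with `x i ≤ t < y i` coexists with one with `y j ≤ t < x j`,
-- so all summands share a sign.
lemma abs_countLE_sub_of_monotone [LinearOrder ι] {x y : ι → ℝ} (hx : Monotone x)
    (hy : Monotone y) (t : ℝ) :
    |countLE x t - countLE y t| =
      ∑ i, |(Ici (x i)).indicator (1 : ℝ → ℝ) t - (Ici (y i)).indicator 1 t| := by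
  rw [countLE_sub_countLE]
  by_cases hneg : ∃ j, y j ≤ t ∧ t < x j
  · obtain ⟨j, hyj, hxj⟩ := hneg
    have hnonpos (i : ι) :
        (Ici (x i)).indicator (1 : ℝ → ℝ) t - (Ici (y i)).indicator 1 t ≤ 0 := by
      by_cases hxi : x i ≤ t <;> by_cases hyi : y i ≤ t <;>
        norm_num [hxi, hyi]
      have hij : i < j := lt_of_not_ge fun hji => hxj.not_ge ((hx hji).trans hxi)
      exact hyi ((hy hij.le).trans hyj)
    rw [← abs_neg, ← Finset.sum_neg_distrib,
      Finset.abs_sum_of_nonneg' fun i => neg_nonneg.2 (hnonpos i)]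
    simp_rw [abs_of_nonpos (hnonpos _)]
  · push Not at hneg
    have hnonneg (i : ι) :
        0 ≤ (Ici (x i)).indicator (1 : ℝ → ℝ) t - (Ici (y i)).indicator 1 t := by
      by_cases hxi : x i ≤ t <;> by_cases hyi : y i ≤ t <;>
        norm_num [hxi, hyi]
      exact hxi (hneg i hyi)
    rw [Finset.abs_sum_of_nonneg' hnonneg]
    simp_rw [abs_of_nonneg (hnonneg _)]

lemma integral_abs_countLE_sub_of_monotone [LinearOrder ι] {x y : ι → ℝ} (hx : Monotone x)
    (hy : Monotone y) : ∫ t, |countLE x t - countLE y t| = ∑ i, |x i - y i| := by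
  simp_rw [abs_countLE_sub_of_monotone hx hy]
  rw [integral_finsetSum _ fun i _ => (integrable_indicator_Ici_sub _ _).abs]
  simp_rw [integral_abs_indicator_Ici_sub]

-- Matching the sorted `x` to the sorted `y` attains the lower bound.
lemma exists_perm_sum_abs_sub_eq_integral (x y : ι → ℝ) :
    ∃ σ : Equiv.Perm ι, ∑ i, |x (σ i) - y i| = ∫ t, |countLE x t - countLE y t| := by
  set e := (Fintype.equivFin ι).symm
  set ex := (Tuple.sort (x ∘ e)).trans e
  set ey := (Tuple.sort (y ∘ e)).trans e
  have hx : Monotone (x ∘ ex) := Tuple.monotone_sort (x ∘ e)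
  have hy : Monotone (y ∘ ey) := Tuple.monotone_sort (y ∘ e)
  refine ⟨ey.symm.trans ex, ?_⟩
  rw [← countLE_comp_equiv x ex, ← countLE_comp_equiv y ey,
    integral_abs_countLE_sub_of_monotone hx hy, ← ey.sum_comp]
  simp

theorem iInf_perm_sum_abs_sub_eq_integral (x y : ι → ℝ) :
    ⨅ σ : Equiv.Perm ι, ∑ i, |x (σ i) - y i| = ∫ t, |countLE x t - countLE y t| := by
  obtain ⟨σ, hσ⟩ := exists_perm_sum_abs_sub_eq_integral x y
  refine le_antisymm ((ciInf_le ⟨0, ?_⟩ σ).trans_eq hσ) (le_ciInf fun τ => ?_)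
  · rintro _ ⟨τ, rfl⟩
    exact Finset.sum_nonneg fun i _ => abs_nonneg _
  · simpa only [countLE_comp_equiv, Function.comp_apply] using
      integral_abs_countLE_sub_le (x ∘ τ) y

lemma countLE_subtype_or {p q : ι → Prop} [DecidablePred p] [DecidablePred q]
    (hpq : ∀ i, p i → ¬ q i) (x : ι → ℝ) (t : ℝ) :
    countLE (fun i : {i // p i ∨ q i} => x i) t =
      countLE (fun i : {i // p i} => x i) t + countLE (fun i : {i // q i} => x i) t := by
  classical
  set f := fun i => (Ici (x i)).indicator (1 : ℝ → ℝ) t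
  rw [countLE, countLE, countLE,
    ← Finset.sum_subtype (Finset.univ.filter fun i => p i ∨ q i) (by simp) f,
    ← Finset.sum_subtype (Finset.univ.filter p) (by simp) f,
    ← Finset.sum_subtype (Finset.univ.filter q) (by simp) f, Finset.filter_or]
  exact Finset.sum_union (Finset.disjoint_filter.2 fun i _ => hpq i)

-- Each `q`-index moves the gap by at most `1`; outside `S ∪ T` the `p`-indices contribute
-- nothing.
lemma abs_countLE_sub_le_add_indicator {p q : ι → Prop} [DecidablePred p] [DecidablePred q]
    (hpq : ∀ i, p i → ¬ q i) {S T : Set ℝ} (hS : S.OrdConnected) (hT : T.OrdConnected)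
    {x y : ι → ℝ} (hp : ∀ i, p i → (x i ∈ S ∧ y i ∈ S) ∨ (x i ∈ T ∧ y i ∈ T)) (t : ℝ) :
    |countLE (fun i : {i // p i} => x i) t - countLE (fun i : {i // p i} => y i) t| ≤
      |countLE (fun i : {i // p i ∨ q i} => x i) t -
          countLE (fun i : {i // p i ∨ q i} => y i) t| +
        Fintype.card {i // q i} * (S ∪ T).indicator 1 t := by
  by_cases ht : t ∈ S ∪ T
  · rw [indicator_of_mem ht, Pi.one_apply, mul_one, countLE_subtype_or hpq x,
      countLE_subtype_or hpq y]
    have hq := abs_countLE_sub_le_card (fun i : {i // q i} => x i) (fun i => y i) t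
    generalize countLE (fun i : {i // p i} => x i) t = xp,
      countLE (fun i : {i // p i} => y i) t = yp, countLE (fun i : {i // q i} => x i) t = xq,
      countLE (fun i : {i // q i} => y i) t = yq at hq ⊢
    calc |xp - yp| = |(xp + xq - (yp + yq)) - (xq - yq)| := by ring_nf
      _ ≤ |xp + xq - (yp + yq)| + |xq - yq| := abs_sub _ _
      _ ≤ _ := add_le_add_right hq _
  · have hzero : countLE (fun i : {i // p i} => x i) t - countLE (fun i : {i // p i} => y i) t
        = 0 := by
      rw [countLE_sub_countLE]
      refine Finset.sum_eq_zero fun i _ => sub_eq_zero.2 ?_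
      rcases hp i i.2 with ⟨hxS, hyS⟩ | ⟨hxT, hyT⟩
      · exact indicator_Ici_eq_of_ordConnected hS hxS hyS fun h => ht (Or.inl h)
      · exact indicator_Ici_eq_of_ordConnected hT hxT hyT fun h => ht (Or.inr h)
    rw [hzero, abs_zero]
    exact add_nonneg (abs_nonneg _)
      (mul_nonneg (Nat.cast_nonneg _) (indicator_nonneg (fun _ _ => zero_le_one) t))

theorem integral_abs_countLE_sub_le_add {p q : ι → Prop} [DecidablePred p] [DecidablePred q]
    (hpq : ∀ i, p i → ¬ q i) {a b c d : ℝ} (hab : a ≤ b) (hcd : c ≤ d) {x y : ι → ℝ}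
    (hp : ∀ i, p i → (x i ∈ Icc a b ∧ y i ∈ Icc a b) ∨ (x i ∈ Icc c d ∧ y i ∈ Icc c d)) :
    ∫ t, |countLE (fun i : {i // p i} => x i) t - countLE (fun i : {i // p i} => y i) t| ≤
      (∫ t, |countLE (fun i : {i // p i ∨ q i} => x i) t -
          countLE (fun i : {i // p i ∨ q i} => y i) t|) +
        Fintype.card {i // q i} * ((b - a) + (d - c)) := by
  have hU : MeasurableSet (Icc a b ∪ Icc c d) := measurableSet_Icc.union measurableSet_Icc
  have hUi : Integrable ((Icc a b ∪ Icc c d).indicator (1 : ℝ → ℝ)) :=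
    (integrable_indicator_iff hU).2
      (integrableOn_const (isCompact_Icc.union isCompact_Icc).measure_lt_top.ne)
  refine (integral_mono (integrable_countLE_sub _ _).abs
    ((integrable_countLE_sub _ _).abs.add (hUi.const_mul _))
    (abs_countLE_sub_le_add_indicator hpq ordConnected_Icc ordConnected_Icc hp)).trans ?_
  rw [integral_add' (integrable_countLE_sub _ _).abs (hUi.const_mul _), integral_const_mul,
    integral_indicator_one hU]
  gcongr
  calc volume.real (Icc a b ∪ Icc c d) ≤ volume.real (Icc a b) + volume.real (Icc c d) :=
        measureReal_union_le _ _
    _ = (b - a) + (d - c) := by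
        rw [Real.volume_real_Icc_of_le hab, Real.volume_real_Icc_of_le hcd]

end CountLE

theorem opt_close_vs_opt_cf_general (n : ℕ) (s r : Fin n → ℝ)
    (Δ ε : ℝ) (hΔ : 0 < Δ) (hε0 : 0 < ε) (hε : ε ≤ 1 / 8)
    (π : Equiv.Perm (Fin n)) :
    (⨅ μ : Equiv.Perm {i : Fin n // isCloseEdge n s r ε Δ π i},
        ∑ i : {i : Fin n // isCloseEdge n s r ε Δ π i}, |s (π (μ i).1) - r i.1|) -
      4 * ε * Δ *
        ((Finset.univ.filter (fun i => isFarEdge n s r ε Δ π i)).card : ℝ) ≤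
    ⨅ μ : Equiv.Perm {i : Fin n //
        isCloseEdge n s r ε Δ π i ∨ isFarEdge n s r ε Δ π i},
      ∑ i : {i : Fin n // isCloseEdge n s r ε Δ π i ∨ isFarEdge n s r ε Δ π i},
        |s (π (μ i).1) - r i.1| := by
  have hLR (x : ℝ) (hL : inIL ε Δ x) (hR : inIR ε Δ x) : False := by nlinarith [hL.2, hR.1]
  have hdisj (i : Fin n) : isCloseEdge n s r ε Δ π i → ¬ isFarEdge n s r ε Δ π i := by
    rintro (⟨hs, hr⟩ | ⟨hs, hr⟩) (⟨hs', hr'⟩ | ⟨hs', hr'⟩)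
    exacts [hLR _ hr hr', hLR _ hs hs', hLR _ hs' hs, hLR _ hr' hr]
  have hgap := integral_abs_countLE_sub_le_add hdisj (by nlinarith) (by nlinarith)
    (x := fun i => s (π i)) (y := r) fun _ h => h
  rw [iInf_perm_sum_abs_sub_eq_integral (fun i : {i // isCloseEdge n s r ε Δ π i} => s (π i))
      fun i => r i,
    iInf_perm_sum_abs_sub_eq_integral
      (fun i : {i // isCloseEdge n s r ε Δ π i ∨ isFarEdge n s r ε Δ π i} => s (π i))
      fun i => r i]
  refine sub_le_iff_le_add.2 (hgap.trans_eq ?_)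
  rw [Fintype.card_subtype]
  ring

/-- For an `ε`-well-separated input (with `0 < ε ≤ 1/8`) and a
perfect matching `π` with close index set `Cl` and far index set `F`, letting
`opt_close` be the minimum rematching cost of the close endpoints among
themselves and `opt_cf` the minimum rematching cost of the close-and-far
endpoints among themselves, one has `opt_close − 4εΔ·|F| ≤ opt_cf`. -/
theorem opt_close_vs_opt_cf (n : ℕ) (hn : 1 ≤ n) (s r : Fin n → ℝ)
    (Δ ε : ℝ) (hΔ : 0 < Δ) (hε0 : 0 < ε) (hε : ε ≤ 1 / 8)
    (hsep_s : ∀ i, (-(ε * Δ) ≤ s i ∧ s i ≤ 0) ∨ (Δ ≤ s i ∧ s i ≤ (1 + ε) * Δ))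
    (hsep_r : ∀ i, -(ε * Δ) ≤ r i ∧ r i ≤ (1 + ε) * Δ)
    (π : Equiv.Perm (Fin n)) :
    (⨅ μ : Equiv.Perm {i : Fin n // isCloseEdge n s r ε Δ π i},
        ∑ i : {i : Fin n // isCloseEdge n s r ε Δ π i}, |s (π (μ i).1) - r i.1|) -
      4 * ε * Δ *
        ((Finset.univ.filter (fun i => isFarEdge n s r ε Δ π i)).card : ℝ) ≤
    ⨅ μ : Equiv.Perm {i : Fin n //
        isCloseEdge n s r ε Δ π i ∨ isFarEdge n s r ε Δ π i},
      ∑ i : {i : Fin n // isCloseEdge n s r ε Δ π i ∨ isFarEdge n s r ε Δ π i},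
        |s (π (μ i).1) - r i.1| :=
  opt_close_vs_opt_cf_general n s r Δ ε hΔ hε0 hε π
end

section
/- Suppose |S| = |R| = n, M_0 = ∅, and for i = 1,…,n, P_i is an augmenting path with respect to M_{i−1} and M_i = M_{i−1} ⊕ P_i. Then for every t ≥ 1, ∑_{i=1}^{n} φ_t(P_i) ≥ ((t−1)/2) · ∑_{i=1}^{n} ℓ(P_i). -/
/-!
Split each augmenting path into the cost of the edges it adds and the cost of the matching edges
it removes. Augmenting changes the matching cost by exactly `added - removed`, so starting from the
empty matching these differences telescope to the cost of the final matching, which is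
nonnegative. Per path, `φ_t(P) - (t-1)/2 · ℓ(P) = (t+1)/2 · (added - removed)`, and summing gives the
claim.
-/

/-- The cost of a matching, viewed as a finite set of (server, request) pairs. -/
noncomputable def matchCost {X : Type*} [MetricSpace X] (M : Finset (X × X)) : ℝ :=
  ∑ e ∈ M, dist e.1 e.2

/-- `M` is a matching between the finite point sets `S` and `R`: every edge
goes from `S` to `R` and every point appears in at most one edge. -/
def IsMatching {X : Type*} (S R : Finset X) (M : Finset (X × X)) : Prop :=
  (∀ e ∈ M, e.1 ∈ S ∧ e.2 ∈ R) ∧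
    ∀ e ∈ M, ∀ e' ∈ M, e ≠ e' → e.1 ≠ e'.1 ∧ e.2 ≠ e'.2

/-- An augmenting path with respect to the matching `M`, given in 0-indexed
form: the path is `r^0, s^1, r^1, …, r^{k-1}, s^k` where `rp j = r^j`
(for `j < k`) and `sp j = s^{j+1}` (for `j < k`).  Its non-matching edges are
`(sp j, rp j)` for `j < k` and its matching edges are `(sp j, rp (j+1))` for
`j < k - 1`; the endpoints `rp 0` and `sp (k-1)` are unmatched in `M`, and all
`2k` points are distinct. -/
structure AugPath {X : Type*} (S R : Finset X) (M : Finset (X × X)) where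
  k : ℕ
  hk : 1 ≤ k
  sp : ℕ → X
  rp : ℕ → X
  sp_mem : ∀ j < k, sp j ∈ S
  rp_mem : ∀ j < k, rp j ∈ R
  sp_inj : ∀ j < k, ∀ j' < k, sp j = sp j' → j = j'
  rp_inj : ∀ j < k, ∀ j' < k, rp j = rp j' → j = j'
  edge_mem : ∀ j < k - 1, (sp j, rp (j + 1)) ∈ M
  edge_not_mem : ∀ j < k, (sp j, rp j) ∉ M
  free_start : ∀ e ∈ M, e.2 ≠ rp 0
  free_end : ∀ e ∈ M, e.1 ≠ sp (k - 1)

/-- The `t`-net-cost `φ_t(P)` of an augmenting path. -/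
noncomputable def AugPath.netCost {X : Type*} [MetricSpace X] {S R : Finset X}
    {M : Finset (X × X)} (P : AugPath S R M) (t : ℝ) : ℝ :=
  t * ∑ j ∈ Finset.range P.k, dist (P.sp j) (P.rp j) -
    ∑ j ∈ Finset.range (P.k - 1), dist (P.sp j) (P.rp (j + 1))

/-- The length `ℓ(P)` of an augmenting path. -/
noncomputable def AugPath.len {X : Type*} [MetricSpace X] {S R : Finset X}
    {M : Finset (X × X)} (P : AugPath S R M) : ℝ :=
  (∑ j ∈ Finset.range P.k, dist (P.sp j) (P.rp j)) +
    ∑ j ∈ Finset.range (P.k - 1), dist (P.sp j) (P.rp (j + 1))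

/-- The matching `M ⊕ P` obtained by augmenting `M` along `P`. -/
def AugPath.augment {X : Type*} [DecidableEq X] {S R : Finset X}
    {M : Finset (X × X)} (P : AugPath S R M) : Finset (X × X) :=
  (M \ (Finset.range (P.k - 1)).image (fun j => (P.sp j, P.rp (j + 1)))) ∪
    (Finset.range P.k).image (fun j => (P.sp j, P.rp j))

namespace AugPath

variable {X : Type*} [MetricSpace X] {S R : Finset X} {M : Finset (X × X)}

noncomputable def addedCost (P : AugPath S R M) : ℝ :=
  ∑ j ∈ Finset.range P.k, dist (P.sp j) (P.rp j)

noncomputable def removedCost (P : AugPath S R M) : ℝ :=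
  ∑ j ∈ Finset.range (P.k - 1), dist (P.sp j) (P.rp (j + 1))

theorem netCost_sub_len (P : AugPath S R M) (t : ℝ) :
    P.netCost t - (t - 1) / 2 * P.len = (t + 1) / 2 * (P.addedCost - P.removedCost) := by
  rw [netCost, len, addedCost, removedCost]
  ring

theorem matchCost_augment [DecidableEq X] (P : AugPath S R M) :
    matchCost P.augment = matchCost M - P.removedCost + P.addedCost := by
  set removed := (Finset.range (P.k - 1)).image fun j => (P.sp j, P.rp (j + 1))
  set added := (Finset.range P.k).image fun j => (P.sp j, P.rp j)
  have removed_sub : removed ⊆ M := by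
    simp only [removed, Finset.image_subset_iff, Finset.mem_range]
    exact P.edge_mem
  have disjoint_added : Disjoint (M \ removed) added := by
    simp only [added, Finset.disjoint_right, Finset.mem_image, Finset.mem_range,
      Finset.mem_sdiff]
    rintro _ ⟨j, hj, rfl⟩ ⟨hM, -⟩
    exact P.edge_not_mem j hj hM
  have cost_removed : matchCost removed = P.removedCost :=
    Finset.sum_image fun j hj j' hj' h => P.sp_inj j
      (by simp at hj; omega) j' (by simp at hj'; omega) (congrArg Prod.fst h)
  have cost_added : matchCost added = P.addedCost :=
    Finset.sum_image fun j hj j' hj' h => P.sp_inj j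
      (by simpa using hj) j' (by simpa using hj') (congrArg Prod.fst h)
  rw [augment, matchCost, Finset.sum_union disjoint_added, Finset.sum_sdiff_eq_sub removed_sub,
    ← matchCost, ← matchCost, ← matchCost, cost_removed, cost_added]

end AugPath

theorem matchCost_nonneg {X : Type*} [MetricSpace X] (M : Finset (X × X)) : 0 ≤ matchCost M :=
  Finset.sum_nonneg fun _ _ => dist_nonneg

theorem sum_addedCost_sub_removedCost {X : Type*} [MetricSpace X] [DecidableEq X]
    {S R : Finset X} {n : ℕ} (M : ℕ → Finset (X × X)) (P : (i : Fin n) → AugPath S R (M i))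
    (hrec : ∀ i : Fin n, M ((i : ℕ) + 1) = (P i).augment) :
    ∑ i, ((P i).addedCost - (P i).removedCost) = matchCost (M n) - matchCost (M 0) := by
  have step (i : Fin n) :
      (P i).addedCost - (P i).removedCost = matchCost (M (i + 1)) - matchCost (M i) := by
    rw [hrec i, AugPath.matchCost_augment]
    ring
  simp only [step]
  rw [Fin.sum_univ_eq_sum_range (fun i => matchCost (M (i + 1)) - matchCost (M i)),
    Finset.sum_range_sub (fun i => matchCost (M i))]

theorem netcost_sum_ge_length_sum_general {X : Type*} [MetricSpace X] [DecidableEq X]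
    (S R : Finset X) (n : ℕ)
    (M : ℕ → Finset (X × X)) (hM0 : M 0 = ∅)
    (P : (i : Fin n) → AugPath S R (M i))
    (hrec : ∀ i : Fin n, M ((i : ℕ) + 1) = (P i).augment)
    (t : ℝ) (ht : 1 ≤ t) :
    ((t - 1) / 2) * ∑ i, (P i).len ≤ ∑ i, (P i).netCost t := by
  have hgain : 0 ≤ ∑ i, ((P i).addedCost - (P i).removedCost) := by
    rw [sum_addedCost_sub_removedCost M P hrec, hM0]
    simpa [matchCost] using matchCost_nonneg (M n)
  have hdiff : ∑ i, (P i).netCost t - (t - 1) / 2 * ∑ i, (P i).len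
      = (t + 1) / 2 * ∑ i, ((P i).addedCost - (P i).removedCost) := by
    simp only [Finset.mul_sum, ← Finset.sum_sub_distrib, AugPath.netCost_sub_len]
  have hscale : 0 ≤ (t + 1) / 2 := by linarith
  linarith [mul_nonneg hscale hgain]

/-- With `|S| = |R| = n`, `M_0 = ∅` and `M_i = M_{i−1} ⊕ P_i`
where each `P_i` is an augmenting path with respect to `M_{i−1}`
(0-indexed below: `P i` is an augmenting path with respect to `M i` and
`M (i+1) = M i ⊕ P i` for `i = 0, …, n−1`), for every `t ≥ 1` one has
`∑_{i=1}^{n} φ_t(P_i) ≥ ((t−1)/2) · ∑_{i=1}^{n} ℓ(P_i)`. -/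
theorem netcost_sum_ge_length_sum {X : Type*} [MetricSpace X] [DecidableEq X]
    (S R : Finset X) (hdisj : Disjoint S R) (n : ℕ)
    (hS : S.card = n) (hR : R.card = n)
    (M : ℕ → Finset (X × X)) (hM0 : M 0 = ∅)
    (P : (i : Fin n) → AugPath S R (M i))
    (hrec : ∀ i : Fin n, M ((i : ℕ) + 1) = (P i).augment)
    (t : ℝ) (ht : 1 ≤ t) :
    ((t - 1) / 2) * ∑ i, (P i).len ≤ ∑ i, (P i).netCost t :=
  netcost_sum_ge_length_sum_general S R n M hM0 P hrec t ht
end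

section
/- Suppose |S| = |R| = n, M_0 = ∅, and for i = 1,…,n, P_i is an augmenting path with respect to M_{i−1} and M_i = M_{i−1} ⊕ P_i. Fix t > 1 and let H = {i : (t−1)·ℓ(P_i) ≤ 4·φ_t(P_i)} (the short paths) and L = {1,…,n} \ H (the long paths). Then ∑_{i ∈ H} φ_t(P_i) ≥ ∑_{i ∈ L} φ_t(P_i). -/
lemma augment_cost {X : Type*} [MetricSpace X] [DecidableEq X] {S R : Finset X}
    {M : Finset (X × X)} (P : AugPath S R M) :
    matchCost P.augment =
      matchCost M + (∑ j ∈ Finset.range P.k, dist (P.sp j) (P.rp j)) -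
        ∑ j ∈ Finset.range (P.k - 1), dist (P.sp j) (P.rp (j + 1)) := by
  classical
  set Old := (Finset.range (P.k - 1)).image (fun j => (P.sp j, P.rp (j + 1))) with hOlddef
  set New := (Finset.range P.k).image (fun j => (P.sp j, P.rp j)) with hNewdef
  have hOld : Old ⊆ M := by
    intro e he
    simp only [hOlddef, Finset.mem_image, Finset.mem_range] at he
    obtain ⟨j, hj, rfl⟩ := he
    exact P.edge_mem j hj
  have hdisj : Disjoint (M \ Old) New := by
    rw [Finset.disjoint_right]
    intro e he
    simp only [hNewdef, Finset.mem_image, Finset.mem_range] at he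
    obtain ⟨j, hj, rfl⟩ := he
    simp only [Finset.mem_sdiff, not_and]
    intro hM
    exact absurd hM (P.edge_not_mem j hj)
  have hsum : matchCost P.augment = matchCost (M \ Old) + matchCost New := by
    unfold matchCost AugPath.augment
    rw [← hOlddef, ← hNewdef, Finset.sum_union hdisj]
  have hMOld : matchCost (M \ Old) = matchCost M - matchCost Old := by
    unfold matchCost
    rw [Finset.sum_sdiff_eq_sub hOld]
  have hOldVal : matchCost Old = ∑ j ∈ Finset.range (P.k - 1), dist (P.sp j) (P.rp (j + 1)) := by
    unfold matchCost
    rw [hOlddef, Finset.sum_image]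
    intro a ha b hb hab
    have ha' : a < P.k := lt_of_lt_of_le (Finset.mem_range.mp ha) (Nat.sub_le _ _)
    have hb' : b < P.k := lt_of_lt_of_le (Finset.mem_range.mp hb) (Nat.sub_le _ _)
    exact P.sp_inj a ha' b hb' (congrArg Prod.fst hab)
  have hNewVal : matchCost New = ∑ j ∈ Finset.range P.k, dist (P.sp j) (P.rp j) := by
    unfold matchCost
    rw [hNewdef, Finset.sum_image]
    intro a ha b hb hab
    exact P.sp_inj a (Finset.mem_range.mp ha) b (Finset.mem_range.mp hb) (congrArg Prod.fst hab)
  rw [hsum, hMOld, hOldVal, hNewVal]; ring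

/-- With `|S| = |R| = n`, `M_0 = ∅` and `M_i = M_{i−1} ⊕ P_i`
(0-indexed below), fix `t > 1` and let `H` be the set of short paths, i.e.
those `i` with `(t−1)·ℓ(P_i) ≤ 4·φ_t(P_i)`, and `L` the complementary set of
long paths.  Then `∑_{i ∈ H} φ_t(P_i) ≥ ∑_{i ∈ L} φ_t(P_i)`. -/
theorem short_netcost_ge_long_netcost {X : Type*} [MetricSpace X] [DecidableEq X]
    (S R : Finset X) (hdisj : Disjoint S R) (n : ℕ)
    (hS : S.card = n) (hR : R.card = n)
    (M : ℕ → Finset (X × X)) (hM0 : M 0 = ∅)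
    (P : (i : Fin n) → AugPath S R (M i))
    (hrec : ∀ i : Fin n, M ((i : ℕ) + 1) = (P i).augment)
    (t : ℝ) (ht : 1 < t) :
    ∑ i ∈ Finset.univ.filter
        (fun i => ¬ ((t - 1) * (P i).len ≤ 4 * (P i).netCost t)),
      (P i).netCost t ≤
    ∑ i ∈ Finset.univ.filter
        (fun i => (t - 1) * (P i).len ≤ 4 * (P i).netCost t),
      (P i).netCost t := by
  classical
  set A : Fin n → ℝ := fun i => ∑ j ∈ Finset.range (P i).k, dist ((P i).sp j) ((P i).rp j)
    with hA
  set B : Fin n → ℝ :=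
      fun i => ∑ j ∈ Finset.range ((P i).k - 1), dist ((P i).sp j) ((P i).rp (j + 1))
    with hB
  have hA0 : ∀ i, 0 ≤ A i := fun i => Finset.sum_nonneg fun j _ => dist_nonneg
  have hB0 : ∀ i, 0 ≤ B i := fun i => Finset.sum_nonneg fun j _ => dist_nonneg
  -- telescoping
  have key : ∀ m : ℕ, m ≤ n →
      matchCost (M m) = ∑ i : Fin n, (if (i : ℕ) < m then A i - B i else 0) := by
    intro m
    induction m with
    | zero =>
      intro _
      simp [hM0, matchCost]
    | succ m ih =>
      intro hm
      have hmn : m < n := hm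
      have ihv := ih (le_of_lt hmn)
      set i₀ : Fin n := ⟨m, hmn⟩ with hi₀
      have hcost : matchCost (M (m + 1)) = matchCost (M m) + A i₀ - B i₀ := by
        have := augment_cost (P i₀)
        rw [hrec i₀] at *
        simpa [hA, hB] using this
      have hstep : ∀ i : Fin n,
          (if (i : ℕ) < m + 1 then A i - B i else 0) =
          (if (i : ℕ) < m then A i - B i else 0) + (if i = i₀ then A i - B i else 0) := by
        intro i
        by_cases h : i = i₀
        · subst h
          simp [hi₀]
        · have hne : (i : ℕ) ≠ m := by
            intro hc
            exact h (Fin.ext (by simp [hi₀, hc]))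
          simp [h, show ((i:ℕ) < m + 1 ↔ (i:ℕ) < m) by omega]

      rw [hcost, ihv, Finset.sum_congr rfl (fun i _ => hstep i), Finset.sum_add_distrib,
        Finset.sum_ite_eq' Finset.univ i₀]
      simp only [Finset.mem_univ, if_true]
      ring
  have hfin : matchCost (M n) = ∑ i : Fin n, (A i - B i) := by
    rw [key n le_rfl]
    exact Finset.sum_congr rfl fun i _ => by simp [i.isLt]
  have hMn0 : 0 ≤ matchCost (M n) := Finset.sum_nonneg fun e _ => dist_nonneg
  have hAB : ∑ i : Fin n, B i ≤ ∑ i : Fin n, A i := by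
    have := hfin ▸ hMn0
    rw [Finset.sum_sub_distrib] at this
    linarith
  -- arithmetic
  set H := Finset.univ.filter (fun i : Fin n => (t - 1) * (P i).len ≤ 4 * (P i).netCost t)
    with hH
  set L := Finset.univ.filter
      (fun i : Fin n => ¬ ((t - 1) * (P i).len ≤ 4 * (P i).netCost t)) with hL
  have hnet : ∀ i : Fin n, (P i).netCost t = t * A i - B i := fun i => rfl
  have hlen : ∀ i : Fin n, (P i).len = A i + B i := fun i => rfl
  have hsplit : (∑ i ∈ H, (P i).netCost t) + ∑ i ∈ L, (P i).netCost t
      = t * (∑ i : Fin n, A i) - ∑ i : Fin n, B i := by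
    rw [hH, hL, Finset.sum_filter_add_sum_filter_not]
    simp only [hnet]
    rw [Finset.sum_sub_distrib, Finset.mul_sum]
  have hLle : ∑ i ∈ L, (P i).netCost t ≤ ∑ i ∈ L, (t - 1) * (A i + B i) / 4 := by
    apply Finset.sum_le_sum
    intro i hi
    rw [hL, Finset.mem_filter] at hi
    have := hi.2
    rw [hnet, hlen] at *
    push_neg at this
    linarith [this]
  have hLle2 : ∑ i ∈ L, (t - 1) * (A i + B i) / 4 ≤ ∑ i : Fin n, (t - 1) * (A i + B i) / 4 := by
    apply Finset.sum_le_sum_of_subset_of_nonneg (Finset.filter_subset _ _)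
    intro i _ _
    have h1 := hA0 i; have h2 := hB0 i
    have h3 : (0:ℝ) ≤ t - 1 := by linarith
    apply div_nonneg (mul_nonneg h3 (by linarith)) (by norm_num)
  have hexp : ∑ i : Fin n, (t - 1) * (A i + B i) / 4
      = (t - 1) * ((∑ i : Fin n, A i) + ∑ i : Fin n, B i) / 4 := by
    rw [← Finset.sum_add_distrib, Finset.mul_sum, Finset.sum_div]
  have hSL : ∑ i ∈ L, (P i).netCost t ≤
      (t - 1) * ((∑ i : Fin n, A i) + ∑ i : Fin n, B i) / 4 := by
    rw [← hexp]; exact le_trans hLle hLle2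
  nlinarith [hSL, hsplit, hAB, Finset.sum_nonneg (fun i (_ : i ∈ Finset.univ) => hA0 i),
    Finset.sum_nonneg (fun i (_ : i ∈ Finset.univ) => hB0 i)]
end

section
/- Fix t > 1. Let M be a matching and let P be an augmenting path with respect to M starting at request r^0 and ending at server s^k. Suppose P is short, i.e., (t−1)·ℓ(P) ≤ 4·φ_t(P), and suppose φ_t(P) ≤ t·d(s', r^0) for every server s' unmatched in M (which holds when P is a minimum t-net-cost augmenting path from r^0, since (s', r^0) is itself an augmenting path). Then for every server s' unmatched in M, d(s^k, r^0) ≤ (4t/(t−1)) · d(s', r^0) = (4 + 4/(t−1)) · d(s', r^0); i.e., s^k is a (4 + 4/(t−1))-approximate nearest free server to r^0. -/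
/-- ANFS property: Fix `t > 1`.  Let `P` be an augmenting path
with respect to the matching `M`, starting at request `r^0 = P.rp 0` and
ending at server `s^k = P.sp (P.k − 1)`.  If `P` is short, i.e.
`(t−1)·ℓ(P) ≤ 4·φ_t(P)`, and `φ_t(P) ≤ t·d(s', r^0)` for every server `s'`
unmatched in `M`, then for every server `s'` unmatched in `M`,
`d(s^k, r^0) ≤ (4 + 4/(t−1))·d(s', r^0)`; i.e. `s^k` is a
`(4 + 4/(t−1))`-approximate nearest free server to `r^0`. -/
theorem approximate_nearest_free_server {X : Type*} [MetricSpace X]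
    (S R : Finset X) (hdisj : Disjoint S R)
    (M : Finset (X × X)) (hM : IsMatching S R M) (P : AugPath S R M)
    (t : ℝ) (ht : 1 < t)
    (hshort : (t - 1) * P.len ≤ 4 * P.netCost t)
    (hmin : ∀ s' ∈ S, (∀ e ∈ M, e.1 ≠ s') →
      P.netCost t ≤ t * dist s' (P.rp 0)) :
    ∀ s' ∈ S, (∀ e ∈ M, e.1 ≠ s') →
      dist (P.sp (P.k - 1)) (P.rp 0) ≤ (4 + 4 / (t - 1)) * dist s' (P.rp 0) := by
  intro s' hs' hfree
  have hφ := hmin s' hs' hfree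
  have htpos : (0:ℝ) < t - 1 := by linarith
  -- telescoping triangle inequality
  have key : ∀ m, m < P.k → dist (P.sp m) (P.rp 0) ≤
      (∑ j ∈ Finset.range (m + 1), dist (P.sp j) (P.rp j)) +
        ∑ j ∈ Finset.range m, dist (P.sp j) (P.rp (j + 1)) := by
    intro m
    induction m with
    | zero => intro _; simp
    | succ n ih =>
      intro hlt
      have hn : n < P.k := Nat.lt_of_succ_lt hlt
      have h1 := ih hn
      rw [Finset.sum_range_succ] at h1
      have htri : dist (P.sp (n + 1)) (P.rp 0) ≤
          dist (P.sp (n + 1)) (P.rp (n + 1)) + dist (P.sp n) (P.rp (n + 1)) +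
            dist (P.sp n) (P.rp 0) := by
        calc dist (P.sp (n + 1)) (P.rp 0)
            ≤ dist (P.sp (n + 1)) (P.rp (n + 1)) + dist (P.rp (n + 1)) (P.rp 0) :=
              dist_triangle _ _ _
          _ ≤ dist (P.sp (n + 1)) (P.rp (n + 1)) +
              (dist (P.rp (n + 1)) (P.sp n) + dist (P.sp n) (P.rp 0)) := by
              gcongr; exact dist_triangle _ _ _
          _ = dist (P.sp (n + 1)) (P.rp (n + 1)) + dist (P.sp n) (P.rp (n + 1)) +
              dist (P.sp n) (P.rp 0) := by rw [dist_comm (P.rp (n+1))]; ring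
      rw [Finset.sum_range_succ (n := n + 1), Finset.sum_range_succ (n := n), Finset.sum_range_succ (n := n)]
      linarith
  have hk1 : P.k - 1 < P.k := Nat.sub_lt (lt_of_lt_of_le Nat.one_pos P.hk) Nat.one_pos
  have hkk : P.k - 1 + 1 = P.k := Nat.succ_pred_eq_of_pos (lt_of_lt_of_le Nat.one_pos P.hk)
  have hlen : dist (P.sp (P.k - 1)) (P.rp 0) ≤ P.len := by
    have := key (P.k - 1) hk1
    rw [hkk] at this
    exact this
  have h1 : (t - 1) * dist (P.sp (P.k - 1)) (P.rp 0) ≤ 4 * (t * dist s' (P.rp 0)) := by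
    calc (t - 1) * dist (P.sp (P.k - 1)) (P.rp 0) ≤ (t - 1) * P.len := by
          exact mul_le_mul_of_nonneg_left hlen (le_of_lt htpos)
      _ ≤ 4 * P.netCost t := hshort
      _ ≤ 4 * (t * dist s' (P.rp 0)) := by linarith
  have heq : (4 + 4 / (t - 1)) = 4 * t / (t - 1) := by field_simp; ring
  rw [heq, div_mul_eq_mul_div, le_div_iff₀ htpos]
  linarith
end

section
/- Let (X,d) be a metric space and let s, r : Fin n → X be servers and requests. Let A, B ⊆ Fin n with |A| = |B|. Let π be a permutation of Fin n (a perfect matching of all servers to all requests) and let τ be a bijection from Fin n \ B to Fin n \ A (a perfect matching of the servers with indices outside A to the requests with indices outside B). Then there exists a bijection μ : B → A such that ∑_{j ∈ B} d(s(μ(j)), r(j)) ≤ ∑_{i} d(s(π(i)), r(i)) + ∑_{j ∉ B} d(s(τ(j)), r(j)); i.e., the leftover servers and requests admit a matching whose cost is at most the sum of the costs of the two given matchings. -/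
open Finset

section Leftover

variable {n : ℕ} {A B : Finset (Fin n)} {π : Equiv.Perm (Fin n)}
  {τ : {j : Fin n // j ∉ B} ≃ {i : Fin n // i ∉ A}}

/-- One step of the augmenting path: from request `j`, go to server `π j`;
if that server is not in `A`, continue to the request `τ⁻¹ (π j)`. -/
private def nxt (A : Finset (Fin n)) (π : Equiv.Perm (Fin n))
    (τ : {j : Fin n // j ∉ B} ≃ {i : Fin n // i ∉ A}) (j : Fin n) : Fin n :=
  if h : π j ∈ A then j else (τ.symm ⟨π j, h⟩).1

private def itr (A : Finset (Fin n)) (π : Equiv.Perm (Fin n))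
    (τ : {j : Fin n // j ∉ B} ≃ {i : Fin n // i ∉ A}) : ℕ → Fin n → Fin n
  | 0, j => j
  | m + 1, j => nxt A π τ (itr A π τ m j)

private lemma nxt_eq {j : Fin n} (h : π j ∉ A) :
    nxt A π τ j = (τ.symm ⟨π j, h⟩).1 := dif_neg h

private lemma nxt_notMem {j : Fin n} (h : π j ∉ A) : nxt A π τ j ∉ B := by
  rw [nxt_eq h]; exact (τ.symm ⟨π j, h⟩).2

private lemma tau_nxt {j : Fin n} (h : π j ∉ A) :
    ((τ ⟨nxt A π τ j, nxt_notMem h⟩ : {i : Fin n // i ∉ A}) : Fin n) = π j := by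
  have : (⟨nxt A π τ j, nxt_notMem h⟩ : {j : Fin n // j ∉ B}) = τ.symm ⟨π j, h⟩ :=
    Subtype.ext (nxt_eq h)
  rw [this, Equiv.apply_symm_apply]

private lemma nxt_inj {j j' : Fin n} (h : π j ∉ A) (h' : π j' ∉ A)
    (e : nxt A π τ j = nxt A π τ j') : j = j' := by
  rw [nxt_eq h, nxt_eq h'] at e
  have h2 : (⟨π j, h⟩ : {i : Fin n // i ∉ A}) = ⟨π j', h'⟩ :=
    τ.symm.injective (Subtype.ext e)
  exact π.injective (congrArg Subtype.val h2)

/-- Paths starting at distinct elements of `B` are disjoint (and a single path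
never revisits a vertex), as long as they have not yet stopped. -/
private lemma itr_inj : ∀ m m' {j j' : Fin n}, j ∈ B → j' ∈ B →
    (∀ t < m, π (itr A π τ t j) ∉ A) → (∀ t < m', π (itr A π τ t j') ∉ A) →
    itr A π τ m j = itr A π τ m' j' → m = m' ∧ j = j' := by
  intro m
  induction m with
  | zero =>
    intro m' j j' hj hj' _ hf' e
    cases m' with
    | zero => exact ⟨rfl, e⟩
    | succ t =>
      exfalso
      have hstep : π (itr A π τ t j') ∉ A := hf' t (Nat.lt_succ_self t)
      have : itr A π τ (t + 1) j' ∉ B := nxt_notMem (τ := τ) hstep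
      exact this (e ▸ hj)
  | succ m ih =>
    intro m' j j' hj hj' hf hf' e
    cases m' with
    | zero =>
      exfalso
      have hstep : π (itr A π τ m j) ∉ A := hf m (Nat.lt_succ_self m)
      have : itr A π τ (m + 1) j ∉ B := nxt_notMem (τ := τ) hstep
      exact this (e ▸ hj')
    | succ t =>
      have hstep : π (itr A π τ m j) ∉ A := hf m (Nat.lt_succ_self m)
      have hstep' : π (itr A π τ t j') ∉ A := hf' t (Nat.lt_succ_self t)
      have e' : itr A π τ m j = itr A π τ t j' := nxt_inj hstep hstep' e
      obtain ⟨h1, h2⟩ := ih t hj hj'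
        (fun u hu => hf u (hu.trans (Nat.lt_succ_self m)))
        (fun u hu => hf' u (hu.trans (Nat.lt_succ_self t))) e'
      exact ⟨by omega, h2⟩

/-- A path starting in `B` eventually stops at a server in `A`. -/
private lemma exists_stop {j : Fin n} (hj : j ∈ B) :
    ∃ m, π (itr A π τ m j) ∈ A := by
  by_contra hcon
  push_neg at hcon
  have hinj : Function.Injective (fun m => itr A π τ m j) := by
    intro m m' e
    exact (itr_inj m m' hj hj (fun t _ => hcon t) (fun t _ => hcon t) e).1
  obtain ⟨a, b, hne, he⟩ := Finite.exists_ne_map_eq_of_infinite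
    (fun m => itr A π τ m j)
  exact hne (hinj he)

variable {X : Type*} [MetricSpace X]

/-- Cost of the `τ`-edge at request index `q` (zero if `q ∈ B`). -/
private def tcost (A : Finset (Fin n))
    (τ : {j : Fin n // j ∉ B} ≃ {i : Fin n // i ∉ A}) (s r : Fin n → X)
    (q : Fin n) : ℝ :=
  if h : q ∈ B then 0 else dist (s ((τ ⟨q, h⟩ : {i : Fin n // i ∉ A}) : Fin n)) (r q)

private lemma tcost_nonneg (s r : Fin n → X) (q : Fin n) :
    0 ≤ tcost A τ s r q := by
  unfold tcost; split <;> [rfl; exact dist_nonneg]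

/-- Triangle-inequality bound along one augmenting path. -/
private lemma path_cost (s r : Fin n → X) :
    ∀ (t : ℕ) (j : Fin n), (∀ m < t, π (itr A π τ m j) ∉ A) →
    dist (s (π (itr A π τ t j))) (r j) ≤
      (∑ m ∈ Finset.range (t + 1), dist (s (π (itr A π τ m j))) (r (itr A π τ m j))) +
        ∑ m ∈ Finset.range t, tcost A τ s r (itr A π τ (m + 1) j) := by
  intro t
  induction t with
  | zero => intro j _; simp [itr]
  | succ t ih =>
    intro j hf
    have hstep : π (itr A π τ t j) ∉ A := hf t (Nat.lt_succ_self t)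
    have hIH := ih j (fun m hm => hf m (hm.trans (Nat.lt_succ_self t)))
    have hnb : itr A π τ (t + 1) j ∉ B := nxt_notMem (τ := τ) hstep
    have htc : tcost A τ s r (itr A π τ (t + 1) j)
        = dist (s (π (itr A π τ t j))) (r (itr A π τ (t + 1) j)) := by
      unfold tcost
      rw [dif_neg hnb]
      congr 2
      exact tau_nxt (τ := τ) hstep
    have htri : dist (s (π (itr A π τ (t + 1) j))) (r j) ≤
        dist (s (π (itr A π τ (t + 1) j))) (r (itr A π τ (t + 1) j)) +
          dist (s (π (itr A π τ t j))) (r (itr A π τ (t + 1) j)) +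
          dist (s (π (itr A π τ t j))) (r j) := by
      calc dist (s (π (itr A π τ (t + 1) j))) (r j)
          ≤ dist (s (π (itr A π τ (t + 1) j))) (r (itr A π τ (t + 1) j)) +
            dist (r (itr A π τ (t + 1) j)) (r j) := dist_triangle _ _ _
        _ ≤ dist (s (π (itr A π τ (t + 1) j))) (r (itr A π τ (t + 1) j)) +
            (dist (r (itr A π τ (t + 1) j)) (s (π (itr A π τ t j))) +
              dist (s (π (itr A π τ t j))) (r j)) := by
            gcongr; exact dist_triangle _ _ _
        _ = _ := by rw [dist_comm (r _) (s _)]; ring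
    rw [Finset.sum_range_succ (fun m => dist (s (π (itr A π τ m j))) (r (itr A π τ m j))) (t + 1),
      Finset.sum_range_succ (fun m => tcost A τ s r (itr A π τ (m + 1) j)) t, htc]
    calc dist (s (π (itr A π τ (t + 1) j))) (r j)
        ≤ dist (s (π (itr A π τ (t + 1) j))) (r (itr A π τ (t + 1) j)) +
          dist (s (π (itr A π τ t j))) (r (itr A π τ (t + 1) j)) +
          dist (s (π (itr A π τ t j))) (r j) := htri
      _ ≤ dist (s (π (itr A π τ (t + 1) j))) (r (itr A π τ (t + 1) j)) +
          dist (s (π (itr A π τ t j))) (r (itr A π τ (t + 1) j)) +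
          ((∑ m ∈ Finset.range (t + 1), dist (s (π (itr A π τ m j))) (r (itr A π τ m j))) +
            ∑ m ∈ Finset.range t, tcost A τ s r (itr A π τ (m + 1) j)) := by gcongr
      _ = _ := by ring

end Leftover

/-- In a metric space, let `A, B ⊆ Fin n` with `|A| = |B|`, let
`π` be a perfect matching of all servers to all requests, and let `τ` be a
perfect matching of the servers with indices outside `A` to the requests with
indices outside `B`.  Then the leftover servers (indices in `A`) and leftover
requests (indices in `B`) admit a matching `μ` whose cost is at most the sum of
the costs of the two given matchings. -/
theorem leftover_matching_bound {X : Type*} [MetricSpace X] (n : ℕ)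
    (s r : Fin n → X) (A B : Finset (Fin n)) (hcard : A.card = B.card)
    (π : Equiv.Perm (Fin n))
    (τ : {j : Fin n // j ∉ B} ≃ {i : Fin n // i ∉ A}) :
    ∃ μ : {j : Fin n // j ∈ B} ≃ {i : Fin n // i ∈ A},
      ∑ j : {j : Fin n // j ∈ B}, dist (s (μ j).1) (r j.1) ≤
        (∑ i, dist (s (π i)) (r i)) +
          ∑ j : {j : Fin n // j ∉ B}, dist (s (τ j).1) (r j.1) := by
  classical
  have hstopEx : ∀ j : {j : Fin n // j ∈ B}, ∃ m, π (itr A π τ m j.1) ∈ A :=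
    fun j => exists_stop j.2
  set k : {j : Fin n // j ∈ B} → ℕ := fun j => Nat.find (hstopEx j) with hk
  have hstop : ∀ j : {j : Fin n // j ∈ B}, π (itr A π τ (k j) j.1) ∈ A :=
    fun j => Nat.find_spec (hstopEx j)
  have hfree : ∀ j : {j : Fin n // j ∈ B}, ∀ m < k j, π (itr A π τ m j.1) ∉ A :=
    fun j m hm => Nat.find_min (hstopEx j) hm
  set f : {j : Fin n // j ∈ B} → {i : Fin n // i ∈ A} :=
    fun j => ⟨π (itr A π τ (k j) j.1), hstop j⟩ with hf
  have hfinj : Function.Injective f := by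
    intro j j' e
    have e' : itr A π τ (k j) j.1 = itr A π τ (k j') j'.1 :=
      π.injective (congrArg Subtype.val e)
    obtain ⟨-, h2⟩ := itr_inj (k j) (k j') j.2 j'.2 (hfree j) (hfree j') e'
    exact Subtype.ext h2
  have hcardt : Fintype.card {j : Fin n // j ∈ B} = Fintype.card {i : Fin n // i ∈ A} := by
    simp only [Fintype.card_coe, hcard]
  have hbij : Function.Bijective f :=
    (Fintype.bijective_iff_injective_and_card f).mpr ⟨hfinj, hcardt⟩
  refine ⟨Equiv.ofBijective f hbij, ?_⟩
  -- per-path bound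
  have hpath : ∀ j : {j : Fin n // j ∈ B},
      dist (s ((Equiv.ofBijective f hbij j).1)) (r j.1) ≤
        (∑ m ∈ Finset.range (k j + 1), dist (s (π (itr A π τ m j.1))) (r (itr A π τ m j.1))) +
          ∑ m ∈ Finset.range (k j), tcost A τ s r (itr A π τ (m + 1) j.1) :=
    fun j => path_cost s r (k j) j.1 (hfree j)
  have step1 : ∑ j : {j : Fin n // j ∈ B}, dist (s ((Equiv.ofBijective f hbij j).1)) (r j.1) ≤
      ∑ j : {j : Fin n // j ∈ B},
        ((∑ m ∈ Finset.range (k j + 1), dist (s (π (itr A π τ m j.1))) (r (itr A π τ m j.1))) +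
          ∑ m ∈ Finset.range (k j), tcost A τ s r (itr A π τ (m + 1) j.1)) :=
    Finset.sum_le_sum (fun j _ => hpath j)
  rw [Finset.sum_add_distrib] at step1
  -- bound the π part
  have hPi : ∑ j : {j : Fin n // j ∈ B},
      ∑ m ∈ Finset.range (k j + 1), dist (s (π (itr A π τ m j.1))) (r (itr A π τ m j.1)) ≤
      ∑ i, dist (s (π i)) (r i) := by
    rw [← Finset.sum_sigma (Finset.univ) (fun j => Finset.range (k j + 1))
      (fun p => dist (s (π (itr A π τ p.2 p.1.1))) (r (itr A π τ p.2 p.1.1)))]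
    have hinj : Set.InjOn (fun p : Σ _ : {j : Fin n // j ∈ B}, ℕ => itr A π τ p.2 p.1.1)
        ((Finset.univ.sigma (fun j => Finset.range (k j + 1))) : Finset _) := by
      rintro ⟨j, m⟩ hm ⟨j', m'⟩ hm' e
      simp only [Finset.coe_sigma, Finset.mem_coe, Finset.mem_sigma, Finset.mem_range,
        Set.mem_sigma_iff] at hm hm'
      obtain ⟨h1, h2⟩ := itr_inj m m' j.2 j'.2
        (fun t ht => hfree j t (by omega)) (fun t ht => hfree j' t (by omega)) e
      simp only [Sigma.mk.inj_iff]
      exact ⟨Subtype.ext h2, heq_of_eq (by omega)⟩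
    rw [← Finset.sum_image (f := fun i => dist (s (π i)) (r i))
      (fun x hx y hy e => hinj (Finset.mem_coe.mpr hx) (Finset.mem_coe.mpr hy) e)]
    exact Finset.sum_le_sum_of_subset_of_nonneg (Finset.subset_univ _)
      (fun _ _ _ => dist_nonneg)
  -- bound the τ part
  have hTau : ∑ j : {j : Fin n // j ∈ B},
      ∑ m ∈ Finset.range (k j), tcost A τ s r (itr A π τ (m + 1) j.1) ≤
      ∑ j : {j : Fin n // j ∉ B}, dist (s (τ j).1) (r j.1) := by
    have hrhs : ∑ j : {j : Fin n // j ∉ B}, dist (s (τ j).1) (r j.1) =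
        ∑ q ∈ Bᶜ, tcost A τ s r q := by
      rw [Finset.sum_subtype Bᶜ (fun q => Finset.mem_compl) (tcost A τ s r)]
      apply Finset.sum_congr rfl
      intro q _
      unfold tcost
      rw [dif_neg q.2]
    rw [hrhs,
      ← Finset.sum_sigma (Finset.univ) (fun j => Finset.range (k j))
      (fun p => tcost A τ s r (itr A π τ (p.2 + 1) p.1.1))]
    have hinj : Set.InjOn (fun p : Σ _ : {j : Fin n // j ∈ B}, ℕ => itr A π τ (p.2 + 1) p.1.1)
        ((Finset.univ.sigma (fun j => Finset.range (k j))) : Finset _) := by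
      rintro ⟨j, m⟩ hm ⟨j', m'⟩ hm' e
      simp only [Finset.coe_sigma, Finset.mem_coe, Finset.mem_sigma, Finset.mem_range,
        Set.mem_sigma_iff] at hm hm'
      obtain ⟨h1, h2⟩ := itr_inj (m + 1) (m' + 1) j.2 j'.2
        (fun t ht => hfree j t (by omega)) (fun t ht => hfree j' t (by omega)) e
      simp only [Sigma.mk.inj_iff]
      exact ⟨Subtype.ext h2, heq_of_eq (by omega)⟩
    rw [← Finset.sum_image (f := tcost A τ s r)
      (fun x hx y hy e => hinj (Finset.mem_coe.mpr hx) (Finset.mem_coe.mpr hy) e)]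
    apply Finset.sum_le_sum_of_subset_of_nonneg
    · intro q hq
      rw [Finset.mem_image] at hq
      obtain ⟨⟨j, m⟩, hp, rfl⟩ := hq
      rw [Finset.mem_sigma, Finset.mem_range] at hp
      rw [Finset.mem_compl]
      exact nxt_notMem (τ := τ) (hfree j m hp.2)
    · exact fun q _ _ => tcost_nonneg s r q
  calc ∑ j : {j : Fin n // j ∈ B}, dist (s ((Equiv.ofBijective f hbij j).1)) (r j.1)
      ≤ _ := step1
    _ ≤ (∑ i, dist (s (π i)) (r i)) +
        ∑ j : {j : Fin n // j ∉ B}, dist (s (τ j).1) (r j.1) := add_le_add hPi hTau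
end
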